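/- arXiv:2203.05532 — 5 statements merged into one kernel-verified Lean document; each statement's English description precedes it below -/
import Mathlib

section
/- Let K be an algebraically closed field of characteristic zero, S = K[x_1,…,x_n], and let a, b, x, y be linearly independent linear forms. Set Q_1 = ax + y² and Q_2 = bx + y². Then the radical of the ideal (Q_1, Q_2) equals the ideal (Q_1, Q_2, y(a − b)). -/
open MvPolynomial

section Aux

variable {K : Type*} [Field K] {n : ℕ}

private lemma deg_one_single {m : Fin n →₀ ℕ} (h : m.degree = 1) :
    ∃ i, m = Finsupp.single i 1 := by
  classical
  have hm : m ≠ 0 := by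
    intro h0; rw [h0, map_zero] at h; exact one_ne_zero h.symm
  obtain ⟨i, hi⟩ := Finsupp.ne_iff.mp hm
  simp only [Finsupp.coe_zero, Pi.zero_apply] at hi
  have hisupp : i ∈ m.support := Finsupp.mem_support_iff.mpr hi
  have hcard : m.support.card ≤ 1 := by
    by_contra hc
    push_neg at hc
    have : 2 ≤ ∑ j ∈ m.support, m j := by
      calc 2 ≤ m.support.card := hc
      _ = ∑ j ∈ m.support, 1 := by simp
      _ ≤ ∑ j ∈ m.support, m j :=
        Finset.sum_le_sum (fun j hj => Nat.one_le_iff_ne_zero.mpr (Finsupp.mem_support_iff.mp hj))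
    rw [Finsupp.degree_apply] at h
    omega
  have hsupp : m.support = {i} :=
    Finset.eq_singleton_iff_unique_mem.mpr ⟨hisupp, fun j hj => by
      by_contra hji
      have : ({i, j} : Finset (Fin n)) ⊆ m.support := by
        intro k hk; simp at hk; rcases hk with rfl | rfl <;> assumption
      have := Finset.card_le_card this
      rw [Finset.card_insert_of_notMem (by simpa using (Ne.symm hji)),
        Finset.card_singleton] at this
      omega⟩
  have hmi : m i = 1 := by
    have h' := h
    rw [Finsupp.degree_apply, hsupp, Finset.sum_singleton] at h'
    exact h'
  exact ⟨i, ((Finsupp.support_eq_singleton).mp hsupp).2.trans (by rw [hmi])⟩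

private lemma rep {f : MvPolynomial (Fin n) K} (hf : f.IsHomogeneous 1) :
    f = ∑ i, C (coeff (Finsupp.single i 1) f) * X i := by
  classical
  apply MvPolynomial.ext
  intro m
  rw [coeff_sum]
  simp only [coeff_C_mul, coeff_X']
  by_cases hm : m.degree = 1
  · obtain ⟨i0, rfl⟩ := deg_one_single hm
    rw [Finset.sum_eq_single i0]
    · simp
    · intro j _ hj
      rw [if_neg, mul_zero]
      intro hs
      exact hj (Finsupp.single_left_inj one_ne_zero |>.mp hs)
    · simp
  · rw [hf.coeff_eq_zero hm, Finset.sum_eq_zero]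
    intro j _
    rw [if_neg, mul_zero]
    intro hs
    rw [← hs] at hm
    exact hm (by rw [Finsupp.degree_apply, Finsupp.support_single_ne_zero _ one_ne_zero,
      Finset.sum_singleton, Finsupp.single_eq_same])

private lemma eval_rep {f : MvPolynomial (Fin n) K} (hf : f.IsHomogeneous 1) (p : Fin n → K) :
    eval p f = ∑ i, coeff (Finsupp.single i 1) f * p i := by
  conv_lhs => rw [rep hf]
  simp [map_sum]

private lemma eval_three {f : MvPolynomial (Fin n) K} (hf : f.IsHomogeneous 1) (s t u : K)
    (p q r : Fin n → K) :
    eval (fun i => s * p i + t * q i + u * r i) f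
      = s * eval p f + t * eval q f + u * eval r f := by
  rw [eval_rep hf, eval_rep hf, eval_rep hf, eval_rep hf,
    Finset.mul_sum, Finset.mul_sum, Finset.mul_sum, ← Finset.sum_add_distrib,
    ← Finset.sum_add_distrib]
  exact Finset.sum_congr rfl (fun i _ => by ring)

private lemma aeval_linear (u v : Fin n → K) (w z : MvPolynomial (Fin n) K)
    {f : MvPolynomial (Fin n) K} (hf : f.IsHomogeneous 1) :
    aeval (fun i => X i + C (u i) * w + C (v i) * z) f
      = f + C (∑ i, coeff (Finsupp.single i 1) f * u i) * w
          + C (∑ i, coeff (Finsupp.single i 1) f * v i) * z := by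
  have aux : ∀ c : Fin n → K,
      aeval (fun i => X i + C (u i) * w + C (v i) * z) (∑ i, C (c i) * X i)
        = (∑ i, C (c i) * X i) + C (∑ i, c i * u i) * w + C (∑ i, c i * v i) * z := by
    intro c
    rw [map_sum]
    simp only [map_mul, aeval_C, aeval_X, algebraMap_eq,
      map_sum (C : K →+* MvPolynomial (Fin n) K), map_mul]
    rw [Finset.sum_mul, Finset.sum_mul, ← Finset.sum_add_distrib, ← Finset.sum_add_distrib]
    exact Finset.sum_congr rfl (fun i _ => by ring)
  conv_lhs => rw [rep hf]
  rw [aux, ← rep hf]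

private lemma sub_aeval_mem (g : Fin n → MvPolynomial (Fin n) K)
    (I : Ideal (MvPolynomial (Fin n) K))
    (hg : ∀ i, X i - g i ∈ I) (f : MvPolynomial (Fin n) K) : f - aeval g f ∈ I := by
  induction f using MvPolynomial.induction_on with
  | C c => simp [aeval_C, algebraMap_eq]
  | add p q hp hq =>
      have h : p + q - aeval g (p + q) = (p - aeval g p) + (q - aeval g q) := by
        rw [map_add]; ring
      rw [h]; exact I.add_mem hp hq
  | mul_X p i hp =>
      have h : p * X i - aeval g (p * X i)
          = p * (X i - g i) + (p - aeval g p) * g i := by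
        rw [map_mul, aeval_X]; ring
      rw [h]
      exact I.add_mem (I.mul_mem_left _ (hg i)) (I.mul_mem_right _ hp)

private lemma eval_surj [Infinite K] {m : ℕ} (v : Fin m → MvPolynomial (Fin n) K)
    (hv : ∀ k, (v k).IsHomogeneous 1) (hind : LinearIndependent K v) (c : Fin m → K) :
    ∃ p : Fin n → K, ∀ k, eval p (v k) = c k := by
  classical
  let F : (Fin n → K) →ₗ[K] (Fin m → K) :=
    { toFun := fun p k => ∑ i, coeff (Finsupp.single i 1) (v k) * p i
      map_add' := by
        intro p q; funext k
        simp [mul_add, Finset.sum_add_distrib]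
      map_smul' := by
        intro s p; funext k
        simp only [Pi.smul_apply, smul_eq_mul, RingHom.id_apply, Finset.mul_sum]
        exact Finset.sum_congr rfl (fun i _ => by ring) }
  have hFeval : ∀ (p : Fin n → K) (k), F p k = eval p (v k) := fun p k =>
    (eval_rep (hv k) p).symm
  suffices hsurj : Function.Surjective F by
    obtain ⟨p, hp⟩ := hsurj c
    exact ⟨p, fun k => by rw [← hFeval, hp]⟩
  rw [← LinearMap.range_eq_top]
  by_contra hne
  obtain ⟨φ, hφ0, hφ⟩ :=
    Submodule.exists_dual_map_eq_bot_of_lt_top (lt_top_iff_ne_top.mpr hne) inferInstance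
  set g : Fin m → K := fun k => φ (fun j => if k = j then 1 else 0) with hg
  have hcomp : ∀ p : Fin n → K, φ (F p) = 0 := by
    intro p
    have hthis : φ (F p) ∈ Submodule.map φ (LinearMap.range F) :=
      Submodule.mem_map_of_mem ⟨p, rfl⟩
    rw [hφ] at hthis
    exact (Submodule.mem_bot K).mp hthis
  have hzero : ∀ p : Fin n → K, eval p (∑ k, C (g k) * v k) = 0 := by
    intro p
    have h1 := hcomp p
    rw [LinearMap.pi_apply_eq_sum_univ] at h1
    rw [map_sum]
    rw [← h1]
    exact Finset.sum_congr rfl (fun k _ => by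
      rw [map_mul, eval_C, ← hFeval p k, smul_eq_mul]; ring)
  have hpoly : (∑ k, C (g k) * v k) = 0 :=
    MvPolynomial.funext (fun p => by rw [hzero p, map_zero])
  have hgz : ∀ k, g k = 0 := by
    apply Fintype.linearIndependent_iff.mp hind g
    rw [← hpoly]
    exact Finset.sum_congr rfl (fun k _ => smul_eq_C_mul _ _)
  apply hφ0
  apply LinearMap.ext; intro w
  rw [LinearMap.pi_apply_eq_sum_univ φ w, LinearMap.zero_apply]
  exact Finset.sum_eq_zero (fun k _ => by
    rw [show φ (fun j => if k = j then 1 else 0) = g k from rfl, hgz k, smul_zero])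

private lemma decomp {f : MvPolynomial (Fin n) K} (hf : f.totalDegree ≤ 1) :
    ∃ (c : K) (l : MvPolynomial (Fin n) K), f = C c + l ∧ l.IsHomogeneous 1 := by
  refine ⟨coeff 0 f, homogeneousComponent 1 f, ?_, homogeneousComponent_isHomogeneous 1 f⟩
  have hsum := sum_homogeneousComponent f
  rw [← homogeneousComponent_zero]
  interval_cases h : f.totalDegree
  · have h1 : homogeneousComponent 1 f = 0 := homogeneousComponent_eq_zero 1 f (by omega)
    rw [h1, add_zero]
    rw [show (0:ℕ) + 1 = 1 from rfl, Finset.sum_range_one] at hsum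
    exact hsum.symm
  · rw [show (1:ℕ) + 1 = 2 from rfl, Finset.sum_range_succ, Finset.sum_range_one] at hsum
    exact hsum.symm

private lemma eq_C_of_td0 {f : MvPolynomial (Fin n) K} (h : f.totalDegree = 0) :
    f = C (coeff 0 f) := by
  classical
  apply MvPolynomial.ext
  intro m
  rw [coeff_C]
  by_cases hm : m = 0
  · rw [if_pos (by rw [hm]), hm]
  · rw [if_neg (fun hc => hm hc.symm)]
    by_contra hc
    have hmem : m ∈ f.support := MvPolynomial.mem_support_iff.mpr hc
    have hle := MvPolynomial.le_totalDegree hmem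
    rw [h, Nat.le_zero] at hle
    exact hm (Finsupp.degree_eq_zero_iff m |>.mp hle)

private noncomputable def Phi : MvPolynomial (Fin n) K →ₐ[K]
    Polynomial (MvPolynomial (Fin n) K) :=
  MvPolynomial.aeval (fun i => Polynomial.C (MvPolynomial.X i) * Polynomial.X)

private lemma Phi_monomial (m : Fin n →₀ ℕ) (c : K) :
    Phi (monomial m c) = Polynomial.C (monomial m c) * Polynomial.X ^ m.degree := by
  rw [Phi, MvPolynomial.aeval_monomial, MvPolynomial.monomial_eq]
  have h : (m.prod fun i k => (Polynomial.C (MvPolynomial.X i : MvPolynomial (Fin n) K)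
      * Polynomial.X) ^ k)
      = Polynomial.C (m.prod fun i k => (MvPolynomial.X i : MvPolynomial (Fin n) K) ^ k)
        * Polynomial.X ^ m.degree := by
    rw [Finsupp.prod, Finsupp.prod, Finsupp.degree_apply, ← Finset.prod_pow_eq_pow_sum,
      map_prod, ← Finset.prod_mul_distrib]
    exact Finset.prod_congr rfl (fun i _ => by rw [mul_pow, map_pow])
  rw [h, map_mul]
  have halg : (algebraMap K (Polynomial (MvPolynomial (Fin n) K))) c
      = Polynomial.C (MvPolynomial.C c) := rfl
  rw [halg]
  ring

private lemma Phi_coeff (f : MvPolynomial (Fin n) K) (k : ℕ) :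
    (Phi f).coeff k = homogeneousComponent k f := by
  conv_lhs => rw [f.as_sum]
  conv_rhs => rw [f.as_sum]
  rw [map_sum, map_sum, Polynomial.finset_sum_coeff]
  refine Finset.sum_congr rfl (fun m hm => ?_)
  rw [Phi_monomial, Polynomial.coeff_C_mul, Polynomial.coeff_X_pow]
  have hmem : monomial m (coeff m f) ∈ homogeneousSubmodule (Fin n) K m.degree :=
    (mem_homogeneousSubmodule _ _).mpr (isHomogeneous_monomial _ rfl)
  rw [homogeneousComponent_of_mem hmem]
  by_cases h : k = m.degree
  · rw [if_pos h, mul_one, if_pos h]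
  · rw [if_neg h, mul_zero, if_neg h]

private lemma Phi_ne_zero {f : MvPolynomial (Fin n) K} (hf : f ≠ 0) : Phi f ≠ 0 := by
  intro h0
  apply hf
  rw [← sum_homogeneousComponent f]
  apply Finset.sum_eq_zero
  intro k _
  rw [← Phi_coeff, h0, Polynomial.coeff_zero]

private lemma Phi_natDegree {f : MvPolynomial (Fin n) K} (hf : f ≠ 0) :
    (Phi f).natDegree = f.totalDegree := by
  apply le_antisymm
  · apply Polynomial.natDegree_le_iff_coeff_eq_zero.mpr
    intro k hk
    rw [Phi_coeff]
    exact homogeneousComponent_eq_zero k f hk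
  · apply Polynomial.le_natDegree_of_ne_zero
    rw [Phi_coeff]
    obtain ⟨m, hm, hdeg⟩ := Finset.exists_mem_eq_sup f.support
      (MvPolynomial.support_nonempty.mpr hf) (fun m : Fin n →₀ ℕ => m.sum fun _ e => e)
    intro h0
    have hc := coeff_homogeneousComponent (n := f.totalDegree) m (φ := f)
    rw [h0, MvPolynomial.coeff_zero] at hc
    have hdm : m.degree = f.totalDegree := by
      rw [Finsupp.degree_apply, MvPolynomial.totalDegree, hdeg]
      rfl
    rw [if_pos hdm] at hc
    exact (MvPolynomial.mem_support_iff.mp hm) hc.symm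

private lemma totalDegree_mul_eq {f g : MvPolynomial (Fin n) K} (hf : f ≠ 0) (hg : g ≠ 0) :
    (f * g).totalDegree = f.totalDegree + g.totalDegree := by
  have hfg : f * g ≠ 0 := mul_ne_zero hf hg
  rw [← Phi_natDegree hfg, ← Phi_natDegree hf, ← Phi_natDegree hg, map_mul]
  exact Polynomial.natDegree_mul (Phi_ne_zero hf) (Phi_ne_zero hg)

private lemma prime_quadric [Infinite K] {a x y : MvPolynomial (Fin n) K}
    (ha : a.IsHomogeneous 1) (hx : x.IsHomogeneous 1) (hy : y.IsHomogeneous 1)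
    (hind : LinearIndependent K ![a, x, y]) : Prime (a * x + y ^ 2) := by
  classical
  set Q := a * x + y ^ 2 with hQ
  have hv : ∀ k, ((![a, x, y]) k).IsHomogeneous 1 := by
    intro k; fin_cases k <;> assumption
  have hQhom : Q.IsHomogeneous 2 := by
    have h1 : (a * x).IsHomogeneous 2 := ha.mul hx
    have h2 : (y ^ 2).IsHomogeneous 2 := by simpa using hy.pow 2
    exact h1.add h2
  obtain ⟨p0, hp0⟩ := eval_surj ![a, x, y] hv hind ![1, 1, 0]
  have hpa : eval p0 a = 1 := hp0 0
  have hpx : eval p0 x = 1 := hp0 1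
  have hpy : eval p0 y = 0 := hp0 2
  have hQne : Q ≠ 0 := by
    intro h0
    have hz : eval p0 Q = 0 := by rw [h0, map_zero]
    rw [hQ, map_add, map_mul, map_pow, hpa, hpx, hpy] at hz
    norm_num at hz
  obtain ⟨pz, hpz⟩ := eval_surj ![a, x, y] hv hind ![0, 0, 0]
  have hQnu : ¬ IsUnit Q := by
    intro hu
    obtain ⟨v, hv'⟩ := isUnit_iff_exists_inv.mp hu
    have hthis := congrArg (eval pz) hv'
    rw [map_mul, map_one, hQ, map_add, map_mul, map_pow] at hthis
    rw [show eval pz a = 0 from hpz 0, show eval pz x = 0 from hpz 1,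
      show eval pz y = 0 from hpz 2] at hthis
    norm_num at hthis
  rw [← UniqueFactorizationMonoid.irreducible_iff_prime]
  refine ⟨hQnu, ?_⟩
  rintro f g hfg
  by_contra hcon
  push_neg at hcon
  obtain ⟨hfnu, hgnu⟩ := hcon
  have hfne : f ≠ 0 := by rintro rfl; rw [zero_mul] at hfg; exact hQne hfg
  have hgne : g ≠ 0 := by rintro rfl; rw [mul_zero] at hfg; exact hQne hfg
  have hfd : 1 ≤ f.totalDegree := by
    by_contra hd
    push_neg at hd
    rw [Nat.lt_one_iff] at hd
    have hC := eq_C_of_td0 hd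
    apply hfnu
    rw [hC]
    refine IsUnit.map (C : K →+* MvPolynomial (Fin n) K) (isUnit_iff_ne_zero.mpr ?_)
    intro h0
    rw [h0, map_zero] at hC
    exact hfne hC
  have hgd : 1 ≤ g.totalDegree := by
    by_contra hd
    push_neg at hd
    rw [Nat.lt_one_iff] at hd
    have hC := eq_C_of_td0 hd
    apply hgnu
    rw [hC]
    refine IsUnit.map (C : K →+* MvPolynomial (Fin n) K) (isUnit_iff_ne_zero.mpr ?_)
    intro h0
    rw [h0, map_zero] at hC
    exact hgne hC
  have hsum : f.totalDegree + g.totalDegree = 2 := by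
    have h := totalDegree_mul_eq hfne hgne
    rw [← hfg, hQhom.totalDegree hQne] at h
    exact h.symm
  have hfd1 : f.totalDegree ≤ 1 := by omega
  have hgd1 : g.totalDegree ≤ 1 := by omega
  obtain ⟨c, l, hfl, hl⟩ := decomp hfd1
  obtain ⟨c', l', hgl, hl'⟩ := decomp hgd1
  have hQ0 : constantCoeff Q = 0 := hQhom.coeff_eq_zero (by simp [map_zero])
  have hl0 : constantCoeff l = 0 := hl.coeff_eq_zero (by simp [map_zero])
  have hl'0 : constantCoeff l' = 0 := hl'.coeff_eq_zero (by simp [map_zero])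
  have hcf : constantCoeff f = c := by rw [hfl, map_add, constantCoeff_C, hl0, add_zero]
  have hcg : constantCoeff g = c' := by rw [hgl, map_add, constantCoeff_C, hl'0, add_zero]
  have hcc : c * c' = 0 := by
    rw [← hcf, ← hcg, ← map_mul, ← hfg, hQ0]
  have hlne : l ≠ 0 := by
    rintro rfl
    rw [add_zero] at hfl
    apply hfnu
    rw [hfl]
    refine IsUnit.map (C : K →+* MvPolynomial (Fin n) K) (isUnit_iff_ne_zero.mpr ?_)
    rintro rfl
    rw [map_zero] at hfl
    exact hfne hfl
  have hl'ne : l' ≠ 0 := by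
    rintro rfl
    rw [add_zero] at hgl
    apply hgnu
    rw [hgl]
    refine IsUnit.map (C : K →+* MvPolynomial (Fin n) K) (isUnit_iff_ne_zero.mpr ?_)
    rintro rfl
    rw [map_zero] at hgl
    exact hgne hgl
  have hCmul_hom : ∀ (d : K) (w : MvPolynomial (Fin n) K), w.IsHomogeneous 1 →
      (C d * w).IsHomogeneous 1 := by
    intro d w hw
    rw [C_mul']
    intro m hm
    rw [MvPolynomial.coeff_smul, smul_eq_mul] at hm
    exact hw (right_ne_zero_of_mul hm)
  have hcz : c = 0 ∧ c' = 0 := by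
    rcases mul_eq_zero.mp hcc with h | h
    · refine ⟨h, ?_⟩
      have hkey : C c' * l = 0 := by
        have h2 : Q - l * l' = C c' * l := by
          rw [hfg, hfl, hgl, h]; simp only [map_zero]; ring
        by_contra hne
        have hh1 : (Q - l * l').IsHomogeneous 2 := hQhom.sub ((hl.mul hl'))
        have hh2 : (Q - l * l').IsHomogeneous 1 := h2 ▸ hCmul_hom c' l hl
        have := hh1.inj_right hh2 (h2 ▸ hne)
        omega
      rcases mul_eq_zero.mp hkey with h' | h'
      · have hc' : c' = 0 := by
          have hcc' := congrArg constantCoeff h'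
          rwa [constantCoeff_C, map_zero] at hcc'
        exact hc'
      · exact absurd h' hlne
    · refine ⟨?_, h⟩
      have hkey : C c * l' = 0 := by
        have h2 : Q - l * l' = C c * l' := by
          rw [hfg, hfl, hgl, h]; simp only [map_zero]; ring
        by_contra hne
        have hh1 : (Q - l * l').IsHomogeneous 2 := hQhom.sub ((hl.mul hl'))
        have hh2 : (Q - l * l').IsHomogeneous 1 := h2 ▸ hCmul_hom c l' hl'
        have := hh1.inj_right hh2 (h2 ▸ hne)
        omega
      rcases mul_eq_zero.mp hkey with h' | h'
      · have hc : c = 0 := by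
          have hcc' := congrArg constantCoeff h'
          rwa [constantCoeff_C, map_zero] at hcc'
        exact hc
      · exact absurd h' hl'ne
  obtain ⟨hc0, hc'0⟩ := hcz
  rw [hc0, map_zero, zero_add] at hfl
  rw [hc'0, map_zero, zero_add] at hgl
  subst hfl hgl
  obtain ⟨p1, hp1⟩ := eval_surj ![a, x, y] hv hind ![1, 0, 0]
  obtain ⟨p2, hp2⟩ := eval_surj ![a, x, y] hv hind ![0, 1, 0]
  obtain ⟨p3, hp3⟩ := eval_surj ![a, x, y] hv hind ![0, 0, 1]
  set α := eval p1 f with hα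
  set β := eval p2 f with hβ
  set γ := eval p3 f with hγ
  set α' := eval p1 g with hα'
  set β' := eval p2 g with hβ'
  set γ' := eval p3 g with hγ'
  have key : ∀ s t u : K,
      (s * α + t * β + u * γ) * (s * α' + t * β' + u * γ') = s * t + u ^ 2 := by
    intro s t u
    have h1 := congrArg (eval (fun i => s * p1 i + t * p2 i + u * p3 i)) hfg
    rw [hQ, map_add, map_mul, map_pow, map_mul] at h1
    rw [eval_three ha, eval_three hx, eval_three hy, eval_three hl, eval_three hl'] at h1
    rw [show eval p1 a = 1 from hp1 0, show eval p2 a = 0 from hp2 0,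
      show eval p3 a = 0 from hp3 0,
      show eval p1 x = 0 from hp1 1, show eval p2 x = 1 from hp2 1,
      show eval p3 x = 0 from hp3 1,
      show eval p1 y = 0 from hp1 2, show eval p2 y = 0 from hp2 2,
      show eval p3 y = 1 from hp3 2] at h1
    rw [← hα, ← hβ, ← hγ, ← hα', ← hβ', ← hγ'] at h1
    rw [← h1]
    ring
  have e1 : α * α' = 0 := by have := key 1 0 0; linear_combination this
  have e2 : β * β' = 0 := by have := key 0 1 0; linear_combination this
  have e3 : γ * γ' = 1 := by have := key 0 0 1; linear_combination this
  have e4 : α * α' + α * β' + β * α' + β * β' = 1 := by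
    have := key 1 1 0; linear_combination this
  have e5 : α * α' + α * γ' + γ * α' + γ * γ' = 1 := by
    have := key 1 0 1; linear_combination this
  rcases mul_eq_zero.mp e1 with hz | hz
  · have h1 : β * α' = 1 := by linear_combination e4 - e2 - e1 - β' * hz
    have h2 : γ * α' = 0 := by linear_combination e5 - e3 - e1 - γ' * hz
    rcases mul_eq_zero.mp h2 with h3 | h3
    · rw [h3, zero_mul] at e3; exact zero_ne_one e3
    · rw [h3, mul_zero] at h1; exact zero_ne_one h1
  · have h1 : α * β' = 1 := by linear_combination e4 - e2 - e1 - β * hz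
    have h2 : α * γ' = 0 := by linear_combination e5 - e3 - e1 - γ * hz
    rcases mul_eq_zero.mp h2 with h3 | h3
    · rw [h3, zero_mul] at h1; exact zero_ne_one h1
    · rw [h3, mul_zero] at e3; exact zero_ne_one e3

end Aux

/-- For linearly independent linear forms `a, b, x, y`, the radical of
`(ax + y², bx + y²)` is `(ax + y², bx + y², y(a − b))`. -/
theorem radical_of_special_pencil
    {K : Type*} [Field K] [IsAlgClosed K] [CharZero K] {n : ℕ}
    (a b x y : MvPolynomial (Fin n) K)
    (ha : a.IsHomogeneous 1) (hb : b.IsHomogeneous 1)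
    (hx : x.IsHomogeneous 1) (hy : y.IsHomogeneous 1)
    (hind : LinearIndependent K ![a, b, x, y]) :
    (Ideal.span {a * x + y ^ 2, b * x + y ^ 2}).radical =
      Ideal.span {a * x + y ^ 2, b * x + y ^ 2, y * (a - b)} := by
  classical
  have hv : ∀ k, ((![a, b, x, y]) k).IsHomogeneous 1 := by
    intro k; fin_cases k <;> assumption
  have hab_ne : a - b ≠ 0 := by
    intro h
    have h0 : ∑ k, (![(1:K), -1, 0, 0]) k • ![a, b, x, y] k = 0 := by
      rw [Fin.sum_univ_four]
      simp only [Matrix.cons_val_zero, Matrix.cons_val_one, Matrix.head_cons,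
        Matrix.cons_val_two, Matrix.tail_cons, Matrix.cons_val_three]
      rw [one_smul, neg_smul, one_smul, zero_smul, zero_smul, add_zero, add_zero,
        ← sub_eq_add_neg, h]
    have h1 := Fintype.linearIndependent_iff.mp hind _ h0 0
    norm_num at h1
  obtain ⟨p1, hp1⟩ := eval_surj ![a, b, x, y] hv hind ![1, 0, 0, 0]
  obtain ⟨p2, hp2⟩ := eval_surj ![a, b, x, y] hv hind ![0, 0, 1, 0]
  obtain ⟨p3, hp3⟩ := eval_surj ![a, b, x, y] hv hind ![0, 0, 0, 1]
  set Q1 := a * x + y ^ 2 with hQ1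
  set Q2 := b * x + y ^ 2 with hQ2
  set P1 := Ideal.span {a - b, Q1} with hP1
  set P2 := Ideal.span {x, y} with hP2
  -- the substitution killing x and y
  set g1 : Fin n → MvPolynomial (Fin n) K := fun i => X i + C (-(p2 i)) * x + C (-(p3 i)) * y with hg1
  set φ1 := (aeval g1 : MvPolynomial (Fin n) K →ₐ[K] MvPolynomial (Fin n) K) with hφ1
  have phi1_lin : ∀ {f : MvPolynomial (Fin n) K}, f.IsHomogeneous 1 →
      φ1 f = f - C (eval p2 f) * x - C (eval p3 f) * y := by
    intro f hf
    have h := aeval_linear (fun i => -(p2 i)) (fun i => -(p3 i)) x y hf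
    have h2 : ∑ i, coeff (Finsupp.single i 1) f * -(p2 i) = -(eval p2 f) := by
      rw [eval_rep hf, ← Finset.sum_neg_distrib]
      exact Finset.sum_congr rfl (fun i _ => by ring)
    have h3 : ∑ i, coeff (Finsupp.single i 1) f * -(p3 i) = -(eval p3 f) := by
      rw [eval_rep hf, ← Finset.sum_neg_distrib]
      exact Finset.sum_congr rfl (fun i _ => by ring)
    rw [hφ1, hg1, h, h2, h3, map_neg, map_neg]
    ring
  have hφ1x : φ1 x = 0 := by
    rw [phi1_lin hx, show eval p2 x = 1 from hp2 2, show eval p3 x = 0 from hp3 2]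
    simp
  have hφ1y : φ1 y = 0 := by
    rw [phi1_lin hy, show eval p2 y = 0 from hp2 3, show eval p3 y = 1 from hp3 3]
    simp
  have hP2ker : P2 = RingHom.ker (φ1 : MvPolynomial (Fin n) K →+* MvPolynomial (Fin n) K) := by
    apply le_antisymm
    · rw [hP2, Ideal.span_le]
      intro t ht
      rcases ht with rfl | ht
      · exact RingHom.mem_ker.mpr hφ1x
      · rcases ht with rfl
        exact RingHom.mem_ker.mpr hφ1y
    · intro f hf
      have hsub := sub_aeval_mem g1 P2 (fun i => by
        rw [hg1]
        have h : X i - (X i + C (-(p2 i)) * x + C (-(p3 i)) * y)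
            = C (p2 i) * x + C (p3 i) * y := by
          rw [map_neg, map_neg]; ring
        rw [h]
        exact Ideal.mem_span_pair.mpr ⟨C (p2 i), C (p3 i), rfl⟩) f
      have hker : aeval g1 f = 0 := RingHom.mem_ker.mp hf
      rwa [hker, sub_zero] at hsub
  have hP2prime : P2.IsPrime := by
    rw [hP2ker]
    exact RingHom.ker_isPrime _
  have hab_notin : a - b ∉ P2 := by
    intro hmem
    rw [hP2ker] at hmem
    have h0 : φ1 (a - b) = 0 := RingHom.mem_ker.mp hmem
    have he2 : eval p2 (a - b) = 0 := by
      rw [map_sub, show eval p2 a = 0 from hp2 0, show eval p2 b = 0 from hp2 1, sub_zero]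
    have he3 : eval p3 (a - b) = 0 := by
      rw [map_sub, show eval p3 a = 0 from hp3 0, show eval p3 b = 0 from hp3 1, sub_zero]
    rw [phi1_lin (ha.sub hb), he2, he3] at h0
    simp only [map_zero, zero_mul, sub_zero] at h0
    exact hab_ne h0
  -- the substitution sending a to b
  set g2 : Fin n → MvPolynomial (Fin n) K := fun i => X i + C (-(p1 i)) * (a - b) + C 0 * 0 with hg2
  set φ2 := (aeval g2 : MvPolynomial (Fin n) K →ₐ[K] MvPolynomial (Fin n) K) with hφ2
  have phi2_lin : ∀ {f : MvPolynomial (Fin n) K}, f.IsHomogeneous 1 →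
      φ2 f = f - C (eval p1 f) * (a - b) := by
    intro f hf
    have h := aeval_linear (fun i => -(p1 i)) (fun _ => 0) (a - b) 0 hf
    have h2 : ∑ i, coeff (Finsupp.single i 1) f * -(p1 i) = -(eval p1 f) := by
      rw [eval_rep hf, ← Finset.sum_neg_distrib]
      exact Finset.sum_congr rfl (fun i _ => by ring)
    rw [hφ2, hg2, h, h2, map_neg]
    ring
  have hφ2a : φ2 a = b := by
    rw [phi2_lin ha, show eval p1 a = 1 from hp1 0]
    simp
  have hφ2b : φ2 b = b := by
    rw [phi2_lin hb, show eval p1 b = 0 from hp1 1]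
    simp
  have hφ2x : φ2 x = x := by
    rw [phi2_lin hx, show eval p1 x = 0 from hp1 2]
    simp
  have hφ2y : φ2 y = y := by
    rw [phi2_lin hy, show eval p1 y = 0 from hp1 3]
    simp
  have hφ2ab : φ2 (a - b) = 0 := by
    rw [map_sub, hφ2a, hφ2b, sub_self]
  have hφ2Q1 : φ2 Q1 = Q2 := by
    rw [hQ1, hQ2, map_add, map_mul, map_pow, hφ2a, hφ2x, hφ2y]
  have hind3 : LinearIndependent K ![b, x, y] := by
    have h : ![b, x, y] = ![a, b, x, y] ∘ (Fin.succ : Fin 3 → Fin 4) := by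
      funext k; fin_cases k <;> rfl
    rw [h]
    exact hind.comp _ (Fin.succ_injective 3)
  have hprimeQ2 : Prime Q2 := prime_quadric hb hx hy hind3
  have hQ2prime : (Ideal.span {Q2}).IsPrime :=
    (Ideal.span_singleton_prime hprimeQ2.ne_zero).mpr hprimeQ2
  have hQ2inP1 : Q2 ∈ P1 := by
    rw [hP1]
    exact Ideal.mem_span_pair.mpr ⟨-x, 1, by rw [hQ1, hQ2]; ring⟩
  have hP1eq : P1 = Ideal.comap (φ2 : MvPolynomial (Fin n) K →+* MvPolynomial (Fin n) K) (Ideal.span {Q2}) := by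
    apply le_antisymm
    · rw [hP1, Ideal.span_le]
      intro t ht
      rcases ht with rfl | ht
      · refine Ideal.mem_comap.mpr ?_
        rw [show (φ2 : MvPolynomial (Fin n) K →+* MvPolynomial (Fin n) K) (a - b) = 0 from hφ2ab]
        exact (Ideal.span {Q2}).zero_mem
      · rcases ht with rfl
        refine Ideal.mem_comap.mpr ?_
        rw [show (φ2 : MvPolynomial (Fin n) K →+* MvPolynomial (Fin n) K) Q1 = Q2 from hφ2Q1]
        exact Ideal.subset_span rfl
    · intro f hf
      have hf' : φ2 f ∈ Ideal.span {Q2} := Ideal.mem_comap.mp hf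
      obtain ⟨c, hc⟩ := Ideal.mem_span_singleton'.mp hf'
      have hsub : f - φ2 f ∈ Ideal.span ({a - b} : Set (MvPolynomial (Fin n) K)) := by
        apply sub_aeval_mem g2 _ (fun i => by
          rw [hg2]
          have h : X i - (X i + C (-(p1 i)) * (a - b) + C 0 * 0)
              = C (p1 i) * (a - b) := by
            rw [map_neg, map_zero]; ring
          rw [h]
          exact Ideal.mem_span_singleton'.mpr ⟨C (p1 i), rfl⟩)
      have hsplit : f = (f - φ2 f) + c * Q2 := by rw [hc]; ring
      rw [hsplit]
      refine Ideal.add_mem _ ?_ (P1.mul_mem_left c hQ2inP1)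
      have hle : Ideal.span ({a - b} : Set (MvPolynomial (Fin n) K)) ≤ P1 := by
        rw [hP1]
        exact Ideal.span_mono (by intro t ht; rcases ht with rfl; exact Set.mem_insert _ _)
      exact hle hsub
  have hP1prime : P1.IsPrime := by
    rw [hP1eq]
    exact Ideal.IsPrime.comap _
  -- J = P1 ⊓ P2
  have hQ1inP2 : Q1 ∈ P2 := by
    rw [hP2]
    exact Ideal.mem_span_pair.mpr ⟨a, y, by rw [hQ1]; ring⟩
  have hJ : Ideal.span {Q1, Q2, y * (a - b)} = P1 ⊓ P2 := by
    apply le_antisymm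
    · rw [Ideal.span_le]
      intro t ht
      rcases ht with rfl | ht
      · refine Ideal.mem_inf.mpr ⟨?_, hQ1inP2⟩
        rw [hP1]
        exact Ideal.subset_span (Set.mem_insert_of_mem _ rfl)
      · rcases ht with rfl | ht
        · refine Ideal.mem_inf.mpr ⟨hQ2inP1, ?_⟩
          rw [hP2]
          exact Ideal.mem_span_pair.mpr ⟨b, y, by rw [hQ2]; ring⟩
        · rcases ht with rfl
          constructor
          · rw [hP1]
            exact Ideal.mul_mem_left _ y (Ideal.subset_span (Set.mem_insert _ _))
          · rw [hP2]
            refine Ideal.mul_mem_right _ _ ?_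
            exact Ideal.subset_span (Set.mem_insert_of_mem _ rfl)
    · intro f hf
      obtain ⟨hf1, hf2⟩ := Ideal.mem_inf.mp hf
      rw [hP1] at hf1
      obtain ⟨α, β, hαβ⟩ := Ideal.mem_span_pair.mp hf1
      have habP2 : α * (a - b) ∈ P2 := by
        have h : α * (a - b) = f - β * Q1 := by rw [← hαβ]; ring
        rw [h]
        exact P2.sub_mem hf2 (P2.mul_mem_left β hQ1inP2)
      have hαP2 : α ∈ P2 := (hP2prime.mem_or_mem habP2).resolve_right hab_notin
      rw [hP2] at hαP2
      obtain ⟨γ, δ, hγδ⟩ := Ideal.mem_span_pair.mp hαP2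
      have hf' : f = (β + γ) * Q1 + (-γ) * Q2 + δ * (y * (a - b)) := by
        rw [← hαβ, ← hγδ, hQ1, hQ2]; ring
      rw [hf']
      refine Ideal.add_mem _ (Ideal.add_mem _ ?_ ?_) ?_
      · exact Ideal.mul_mem_left _ _ (Ideal.subset_span (Set.mem_insert _ _))
      · exact Ideal.mul_mem_left _ _
          (Ideal.subset_span (Set.mem_insert_of_mem _ (Set.mem_insert _ _)))
      · exact Ideal.mul_mem_left _ _
          (Ideal.subset_span (Set.mem_insert_of_mem _ (Set.mem_insert_of_mem _ rfl)))
  have hJrad : (Ideal.span {Q1, Q2, y * (a - b)}).radical = Ideal.span {Q1, Q2, y * (a - b)} := by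
    rw [hJ, Ideal.radical_inf, hP1prime.radical, hP2prime.radical]
  have hIJ : Ideal.span {Q1, Q2} ≤ Ideal.span {Q1, Q2, y * (a - b)} := by
    apply Ideal.span_mono
    intro t ht
    rcases ht with rfl | ht
    · exact Set.mem_insert _ _
    · rcases ht with rfl
      exact Set.mem_insert_of_mem _ (Set.mem_insert _ _)
  have hsq : (y * (a - b)) ^ 2 ∈ Ideal.span {Q1, Q2} :=
    Ideal.mem_span_pair.mpr ⟨(a - b) ^ 2 - a * (a - b), a * (a - b), by rw [hQ1, hQ2]; ring⟩
  have hJle : Ideal.span {Q1, Q2, y * (a - b)} ≤ (Ideal.span {Q1, Q2}).radical := by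
    rw [Ideal.span_le]
    intro t ht
    rcases ht with rfl | ht
    · exact Ideal.le_radical (Ideal.subset_span (Set.mem_insert _ _))
    · rcases ht with rfl | ht
      · exact Ideal.le_radical (Ideal.subset_span (Set.mem_insert_of_mem _ rfl))
      · rcases ht with rfl
        exact Ideal.mem_radical_of_pow_mem (m := 2) (Ideal.le_radical hsq)
  refine le_antisymm ?_ hJle
  calc (Ideal.span {Q1, Q2}).radical
      ≤ (Ideal.span {Q1, Q2, y * (a - b)}).radical := Ideal.radical_mono hIJ
    _ = Ideal.span {Q1, Q2, y * (a - b)} := hJrad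
end

section
/- Let Q_1, Q_2 be irreducible quadratic forms in ℂ[x_1,…,x_n]. If there exist two distinct scalars t_1 ≠ t_2 ∈ ℂ such that rank(Q_1 + t_1·Q_2) = 1 and rank(Q_1 + t_2·Q_2) = 1, then rank(Q_1) = rank(Q_2) = 2 and Lin(Q_1) = Lin(Q_2). -/
open MvPolynomial

noncomputable section

/-- The rank of a quadratic form: the smallest `s` such that `Q = ∑_{i=1}^s a_i * b_i`
with all `a_i, b_i` linear forms. -/
def quadRank {n : ℕ} (Q : MvPolynomial (Fin n) ℂ) : ℕ :=
  sInf {s : ℕ | ∃ a b : Fin s → MvPolynomial (Fin n) ℂ,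
    (∀ i, (a i).IsHomogeneous 1) ∧ (∀ i, (b i).IsHomogeneous 1) ∧ Q = ∑ i, a i * b i}

/-- `Lin_old(Q)`: the span of the linear forms in a minimal representation of `Q`
(independent of the chosen minimal representation; formalized as the infimum over all
minimal representations). -/
def LinOld {n : ℕ} (Q : MvPolynomial (Fin n) ℂ) : Submodule ℂ (MvPolynomial (Fin n) ℂ) :=
  ⨅ (a : Fin (quadRank Q) → MvPolynomial (Fin n) ℂ)
    (b : Fin (quadRank Q) → MvPolynomial (Fin n) ℂ)
    (_ : (∀ i, (a i).IsHomogeneous 1) ∧ (∀ i, (b i).IsHomogeneous 1) ∧ Q = ∑ i, a i * b i),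
    Submodule.span ℂ (Set.range a ∪ Set.range b)

/-- `Lin(Q) := span{Q}` if `rank Q ≥ 5`, and `Lin(Q) := Lin_old(Q)` otherwise. -/
def Lin {n : ℕ} (Q : MvPolynomial (Fin n) ℂ) : Submodule ℂ (MvPolynomial (Fin n) ℂ) :=
  if 5 ≤ quadRank Q then Submodule.span ℂ {Q} else LinOld Q

namespace TwoPencil
variable {n : ℕ}

abbrev Poly (n : ℕ) := MvPolynomial (Fin n) ℂ

lemma hom1_smul {p : Poly n} (hp : p.IsHomogeneous 1) (c : ℂ) : (c • p).IsHomogeneous 1 := by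
  intro d hd
  rw [MvPolynomial.coeff_smul] at hd
  exact hp (by simpa using fun h => hd (by simp [h]))

lemma hom1_add {p q : Poly n} (hp : p.IsHomogeneous 1) (hq : q.IsHomogeneous 1) :
    (p + q).IsHomogeneous 1 := hp.add hq

lemma not_unit_of_hom1 {p : Poly n} (hp : p.IsHomogeneous 1) (hp0 : p ≠ 0) : ¬ IsUnit p := by
  intro h
  obtain ⟨u, rfl⟩ := h
  have h1 : (u : Poly n) * ↑u⁻¹ = 1 := u.mul_inv
  have := congrArg constantCoeff h1
  rw [map_mul, map_one] at this
  have hc : constantCoeff (u : Poly n) = 0 := by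
    rw [constantCoeff_eq]
    exact hp.coeff_eq_zero (by simp [Finsupp.degree])
  rw [hc, zero_mul] at this
  exact zero_ne_one this

lemma not_irreducible_mul_hom1 {a b : Poly n} (ha : a.IsHomogeneous 1) (hb : b.IsHomogeneous 1) :
    ¬ Irreducible (a * b) := by
  intro h
  by_cases ha0 : a = 0
  · rw [ha0, zero_mul] at h
    exact not_irreducible_zero h
  by_cases hb0 : b = 0
  · rw [hb0, mul_zero] at h
    exact not_irreducible_zero h
  rcases h.isUnit_or_isUnit rfl with h' | h'
  · exact not_unit_of_hom1 ha ha0 h'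
  · exact not_unit_of_hom1 hb hb0 h'

lemma exists_factor (A B C : ℂ) : ∃ e f g h : ℂ, e * g = A ∧ e * h + f * g = B ∧ f * h = C := by
  by_cases hA : A = 0
  · exact ⟨0, 1, B, C, by simp [hA], by simp, by simp⟩
  · obtain ⟨d, hd⟩ := IsAlgClosed.exists_pow_nat_eq (B ^ 2 - 4 * A * C) (n := 2) (by norm_num)
    refine ⟨A, (B + d) / 2, 1, (B - d) / (2 * A), by simp, ?_, ?_⟩
    · field_simp
      ring
    · field_simp
      linear_combination -hd

lemma not_irreducible_binary {p q : Poly n} (hp : p.IsHomogeneous 1) (hq : q.IsHomogeneous 1)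
    (A B C : ℂ) : ¬ Irreducible (A • (p * p) + B • (p * q) + C • (q * q)) := by
  obtain ⟨e, f, g, h, h1, h2, h3⟩ := exists_factor A B C
  have key : A • (p * p) + B • (p * q) + C • (q * q) = (e • p + f • q) * (g • p + h • q) := by
    simp only [smul_eq_C_mul]
    rw [← h1, ← h2, ← h3]
    push_cast [map_add, map_mul]
    ring
  rw [key]
  exact not_irreducible_mul_hom1 ((hom1_smul hp e).add (hom1_smul hq f))
    ((hom1_smul hp g).add (hom1_smul hq h))


lemma degree_one_single {d : Fin n →₀ ℕ} (hd : d.degree = 1) : ∃ j, d = Finsupp.single j 1 := by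
  have hsupp : d.support.Nonempty := by
    rw [Finset.nonempty_iff_ne_empty]
    intro h
    rw [Finsupp.degree_apply, h, Finset.sum_empty] at hd
    exact one_ne_zero hd.symm
  obtain ⟨j, hj⟩ := hsupp
  refine ⟨j, ?_⟩
  have hj1 : 1 ≤ d j := Nat.one_le_iff_ne_zero.2 (Finsupp.mem_support_iff.1 hj)
  have hle : d j ≤ d.degree := Finset.single_le_sum (fun i _ => Nat.zero_le _) hj
  ext i
  by_cases hij : i = j
  · subst hij
    simp only [Finsupp.single_eq_same]
    omega
  · simp only [Finsupp.single_eq_of_ne' (Ne.symm hij)]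
    by_contra hne
    have hi : i ∈ d.support := Finsupp.mem_support_iff.2 fun h => hne (by omega)
    have hkey : d i + d j ≤ d.degree := by
      rw [Finsupp.degree_apply]
      have h1 := Finset.add_sum_erase _ d hi
      have hj' : j ∈ d.support.erase i := Finset.mem_erase.2 ⟨Ne.symm hij, hj⟩
      have h2 := Finset.single_le_sum (f := d) (fun k _ => Nat.zero_le _) hj'
      omega
    omega

lemma hom1_rep {p : Poly n} (hp : p.IsHomogeneous 1) :
    p = ∑ j, (coeff (Finsupp.single j 1) p) • X j := by
  have hXj : ∀ j, (coeff (Finsupp.single j 1) p) • (X j : Poly n)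
      = monomial (Finsupp.single j 1) (coeff (Finsupp.single j 1) p) := by
    intro j
    rw [X, smul_monomial, smul_eq_mul, mul_one]
  have hinj : Function.Injective (fun j : Fin n => Finsupp.single j (1:ℕ)) :=
    Finsupp.single_left_injective one_ne_zero
  have hsub : p.support ⊆ Finset.univ.image fun j => Finsupp.single j (1:ℕ) := by
    intro m hm
    obtain ⟨j, rfl⟩ := degree_one_single (d := m) (by
      have := hp (Finsupp.mem_support_iff.1 hm)
      rw [Finsupp.degree_eq_weight_one]; exact this)
    exact Finset.mem_image.2 ⟨j, Finset.mem_univ j, rfl⟩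
  have hzero : ∀ m ∈ (Finset.univ.image fun j => Finsupp.single j (1:ℕ)),
      m ∉ p.support → (monomial m) (coeff m p) = 0 := by
    intro m _ hm
    rw [MvPolynomial.notMem_support_iff.1 hm, monomial_zero]
  conv_lhs => rw [← support_sum_monomial_coeff p]
  rw [Finset.sum_subset hsub hzero, Finset.sum_image (fun a _ b _ h => hinj h)]
  exact Finset.sum_congr rfl fun j _ => (hXj j).symm


/-- span of partial derivatives -/
def W (Q : Poly n) : Submodule ℂ (Poly n) :=
  Submodule.span ℂ (Set.range fun j => pderiv j Q)

/-- directional derivative -/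
def dv (v : Fin n → ℂ) (f : Poly n) : Poly n := ∑ j, v j • pderiv j f

lemma dv_mem_W (v : Fin n → ℂ) (Q : Poly n) : dv v Q ∈ W Q :=
  Submodule.sum_mem _ fun j _ =>
    Submodule.smul_mem _ _ (Submodule.subset_span ⟨j, rfl⟩)

lemma dv_add (v : Fin n → ℂ) (f g : Poly n) : dv v (f + g) = dv v f + dv v g := by
  simp [dv, Finset.sum_add_distrib, smul_add]

lemma dv_smul (v : Fin n → ℂ) (c : ℂ) (f : Poly n) : dv v (c • f) = c • dv v f := by
  simp [dv, Finset.smul_sum, smul_comm c]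

lemma dv_mul (v : Fin n → ℂ) (f g : Poly n) : dv v (f * g) = dv v f * g + f * dv v g := by
  simp only [dv, pderiv_mul, smul_add, Finset.sum_add_distrib, Finset.sum_mul, Finset.mul_sum,
    smul_mul_assoc, mul_smul_comm]

lemma pderiv_hom1 {p : Poly n} (hp : p.IsHomogeneous 1) (j : Fin n) :
    pderiv j p = C (coeff (Finsupp.single j 1) p) := by
  conv_lhs => rw [hom1_rep hp]
  rw [map_sum]
  rw [Finset.sum_eq_single j]
  · rw [Derivation.map_smul, pderiv_X_self, smul_eq_C_mul, mul_one]
  · intro k _ hk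
    rw [Derivation.map_smul, pderiv_X_of_ne hk, smul_zero]
  · intro h
    exact absurd (Finset.mem_univ j) h

lemma dv_hom1 {p : Poly n} (hp : p.IsHomogeneous 1) (φ : Poly n →ₗ[ℂ] ℂ) :
    dv (fun j => φ (X j)) p = C (φ p) := by
  conv_rhs => rw [hom1_rep hp]
  rw [map_sum]
  simp only [map_smul, smul_eq_mul]
  rw [dv]
  rw [map_sum C]
  refine Finset.sum_congr rfl fun j _ => ?_
  rw [pderiv_hom1 hp, smul_eq_C_mul, map_mul]
  ring

/-- Existence of dual directions for independent linear forms -/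
lemma exists_dual {k : ℕ} (p : Fin k → Poly n) (hp : ∀ i, (p i).IsHomogeneous 1)
    (hli : LinearIndependent ℂ p) (i₀ : Fin k) :
    ∃ v : Fin n → ℂ, ∀ i, dv v (p i) = C (if i = i₀ then (1:ℂ) else 0) := by
  set bs := Module.Basis.span hli
  obtain ⟨φ, hφ⟩ := LinearMap.exists_extend (bs.coord i₀)
  refine ⟨fun j => φ (X j), fun i => ?_⟩
  rw [dv_hom1 (hp i) φ]
  congr 1
  have h1 : φ (p i) = bs.coord i₀ (bs i) := by
    have hbi : ((bs i : Submodule.span ℂ (Set.range p)) : Poly n) = p i := by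
      simp only [bs, Module.Basis.span_apply]
    rw [← hbi]
    exact DFunLike.congr_fun hφ (bs i)
  rw [h1, Module.Basis.coord_apply, Module.Basis.repr_self]
  exact Finsupp.single_apply

/-- W of a representation is inside the span of its forms -/
lemma W_le_span {s : ℕ} (a b : Fin s → Poly n) (ha : ∀ i, (a i).IsHomogeneous 1)
    (hb : ∀ i, (b i).IsHomogeneous 1) :
    W (∑ i, a i * b i) ≤ Submodule.span ℂ (Set.range a ∪ Set.range b) := by
  rw [W, Submodule.span_le]
  rintro x ⟨j, rfl⟩
  show pderiv j (∑ i, a i * b i) ∈ _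
  have hsum := map_sum ((pderiv (R := ℂ) j).toLinearMap)
    (fun i => a i * b i) Finset.univ
  simp only [Derivation.coeFn_coe] at hsum
  rw [hsum]
  refine Submodule.sum_mem _ fun i _ => ?_
  rw [pderiv_mul, pderiv_hom1 (ha i), pderiv_hom1 (hb i), ← smul_eq_C_mul,
    mul_comm, ← smul_eq_C_mul]
  refine Submodule.add_mem _ (Submodule.smul_mem _ _ ?_) (Submodule.smul_mem _ _ ?_)
  · exact Submodule.subset_span (Or.inr ⟨i, rfl⟩)
  · exact Submodule.subset_span (Or.inl ⟨i, rfl⟩)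


lemma solve3 {M : Type*} [AddCommGroup M] [Module ℂ M] {a b c : M} {x y z : ℂ}
    (h : x • a + y • b + z • c = 0) (hx : x ≠ 0) :
    a = (-(x⁻¹*y)) • b + (-(x⁻¹*z)) • c := by
  rw [← sub_eq_zero]
  have h2 : x⁻¹ • (x • a + y • b + z • c) = 0 := by rw [h, smul_zero]
  calc a - ((-(x⁻¹*y)) • b + (-(x⁻¹*z)) • c)
      = x⁻¹ • (x • a + y • b + z • c) := by
        rw [smul_add, smul_add, smul_smul, smul_smul, smul_smul, inv_mul_cancel₀ hx, one_smul]
        module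
    _ = 0 := h2

lemma solve4 {M : Type*} [AddCommGroup M] [Module ℂ M] {a b c d : M} {x y z w : ℂ}
    (h : x • a + y • b + z • c + w • d = 0) (hx : x ≠ 0) :
    a = (-(x⁻¹*y)) • b + (-(x⁻¹*z)) • c + (-(x⁻¹*w)) • d := by
  rw [← sub_eq_zero]
  have h2 : x⁻¹ • (x • a + y • b + z • c + w • d) = 0 := by rw [h, smul_zero]
  calc a - ((-(x⁻¹*y)) • b + (-(x⁻¹*z)) • c + (-(x⁻¹*w)) • d)
      = x⁻¹ • (x • a + y • b + z • c + w • d) := by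
        rw [smul_add, smul_add, smul_add, smul_smul, smul_smul, smul_smul, smul_smul,
          inv_mul_cancel₀ hx, one_smul]
        module
    _ = 0 := h2

lemma core3 (p q r : Poly n) (hp : p.IsHomogeneous 1) (hq : q.IsHomogeneous 1)
    (hr : r.IsHomogeneous 1) (α β γ : ℂ)
    (hirr : Irreducible (p*q + α•(p*r) + β•(q*r) + γ•(r*r))) :
    Submodule.span ℂ {p, q, r} ≤ W (p*q + α•(p*r) + β•(q*r) + γ•(r*r)) := by
  set Q : Poly n := p*q + α•(p*r) + β•(q*r) + γ•(r*r) with hQdef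
  by_cases hli : LinearIndependent ℂ ![p, q, r]
  · by_cases hγ : γ = α*β
    · exfalso
      have hfac : Q = (p + β•r) * (q + α•r) := by
        simp only [hQdef, hγ, smul_eq_C_mul, map_mul]
        ring
      rw [hfac] at hirr
      exact not_irreducible_mul_hom1 (hp.add (hom1_smul hr β)) (hq.add (hom1_smul hr α)) hirr
    · have hhom : ∀ i, (![p, q, r] i).IsHomogeneous 1 := by
        intro i
        fin_cases i <;> assumption
      obtain ⟨v0, hv0⟩ := exists_dual ![p,q,r] hhom hli 0
      obtain ⟨v1, hv1⟩ := exists_dual ![p,q,r] hhom hli 1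
      obtain ⟨v2, hv2⟩ := exists_dual ![p,q,r] hhom hli 2
      have hp0 : dv v0 p = 1 := by simpa using hv0 0
      have hq0 : dv v0 q = 0 := by simpa using hv0 1
      have hr0 : dv v0 r = 0 := by simpa using hv0 2
      have hp1 : dv v1 p = 0 := by simpa using hv1 0
      have hq1 : dv v1 q = 1 := by simpa using hv1 1
      have hr1 : dv v1 r = 0 := by simpa using hv1 2
      have hp2 : dv v2 p = 0 := by simpa using hv2 0
      have hq2 : dv v2 q = 0 := by simpa using hv2 1
      have hr2 : dv v2 r = 1 := by simpa using hv2 2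
      have hA : dv v0 Q = q + α • r := by
        simp only [hQdef, dv_add, dv_smul, dv_mul, hp0, hq0, hr0, one_mul, mul_one,
          zero_mul, mul_zero, add_zero, zero_add, smul_zero]
      have hB : dv v1 Q = p + β • r := by
        simp only [hQdef, dv_add, dv_smul, dv_mul, hp1, hq1, hr1, one_mul, mul_one,
          zero_mul, mul_zero, add_zero, zero_add, smul_zero]
      have hE : dv v2 Q = α • p + β • q + γ • (r + r) := by
        simp only [hQdef, dv_add, dv_smul, dv_mul, hp2, hq2, hr2, one_mul, mul_one,
          zero_mul, mul_zero, add_zero, zero_add, smul_zero]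
      have h2 : (2*(γ - α*β)) ≠ 0 := by
        intro h
        rcases mul_eq_zero.1 h with h' | h'
        · norm_num at h'
        · exact hγ (by linear_combination h')
      have hrW : r ∈ W Q := by
        have hre : r = (2*(γ - α*β))⁻¹ • (dv v2 Q - α • dv v1 Q - β • dv v0 Q) := by
          rw [hA, hB, hE]
          match_scalars <;> field_simp <;> ring
        rw [hre]
        exact Submodule.smul_mem _ _ (Submodule.sub_mem _
          (Submodule.sub_mem _ (dv_mem_W _ _) (Submodule.smul_mem _ _ (dv_mem_W _ _)))
          (Submodule.smul_mem _ _ (dv_mem_W _ _)))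
      have hqW : q ∈ W Q := by
        have hqe : q = dv v0 Q - α • r := by rw [hA]; module
        rw [hqe]
        exact Submodule.sub_mem _ (dv_mem_W _ _) (Submodule.smul_mem _ _ hrW)
      have hpW : p ∈ W Q := by
        have hpe : p = dv v1 Q - β • r := by rw [hB]; module
        rw [hpe]
        exact Submodule.sub_mem _ (dv_mem_W _ _) (Submodule.smul_mem _ _ hrW)
      rw [Submodule.span_le]
      rintro x hx
      simp only [Set.mem_insert_iff, Set.mem_singleton_iff] at hx
      rcases hx with rfl | rfl | rfl <;> assumption
  · exfalso
    obtain ⟨g, hgsum, i, hgi⟩ := Fintype.not_linearIndependent_iff.1 hli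
    simp only [Fin.sum_univ_three, Matrix.cons_val_zero, Matrix.cons_val_one, Matrix.head_cons,
      Matrix.cons_val_two, Matrix.tail_cons] at hgsum
    have hor : g 0 ≠ 0 ∨ g 1 ≠ 0 ∨ g 2 ≠ 0 := by
      fin_cases i
      · exact Or.inl hgi
      · exact Or.inr (Or.inl hgi)
      · exact Or.inr (Or.inr hgi)
    rcases hor with hg | hg | hg
    · -- p = s•q + t•r
      have hpe := solve3 hgsum hg
      set s := -((g 0)⁻¹ * g 1) with hs
      set t := -((g 0)⁻¹ * g 2) with ht
      have hQbin : Q = s•(q*q) + (t + α*s + β)•(q*r) + (α*t+γ)•(r*r) := by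
        rw [hQdef, hpe]
        simp only [smul_eq_C_mul, map_add, map_mul]
        ring
      rw [hQbin] at hirr
      exact not_irreducible_binary hq hr _ _ _ hirr
    · -- q = s•p + t•r
      have h' : g 1 • q + g 0 • p + g 2 • r = 0 := by rw [← hgsum]; abel
      have hqe := solve3 h' hg
      set s := -((g 1)⁻¹ * g 0) with hs
      set t := -((g 1)⁻¹ * g 2) with ht
      have hQbin : Q = s•(p*p) + (t + α + β*s)•(p*r) + (β*t+γ)•(r*r) := by
        rw [hQdef, hqe]
        simp only [smul_eq_C_mul, map_add, map_mul]
        ring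
      rw [hQbin] at hirr
      exact not_irreducible_binary hp hr _ _ _ hirr
    · -- r = s•p + t•q
      have h' : g 2 • r + g 0 • p + g 1 • q = 0 := by rw [← hgsum]; abel
      have hre := solve3 h' hg
      set s := -((g 2)⁻¹ * g 0) with hs
      set t := -((g 2)⁻¹ * g 1) with ht
      have hQbin : Q = (α*s + γ*s*s)•(p*p) + (1 + α*t + β*s + 2*γ*s*t)•(p*q)
          + (β*t + γ*t*t)•(q*q) := by
        rw [hQdef, hre]
        simp only [smul_eq_C_mul, map_add, map_mul, map_one, map_ofNat]
        ring
      rw [hQbin] at hirr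
      exact not_irreducible_binary hp hq _ _ _ hirr


lemma core (a b c d : Poly n) (ha : a.IsHomogeneous 1) (hb : b.IsHomogeneous 1)
    (hc : c.IsHomogeneous 1) (hd : d.IsHomogeneous 1)
    (hirr : Irreducible (a*b + c*d)) :
    Submodule.span ℂ {a, b, c, d} ≤ W (a*b + c*d) := by
  by_cases hli : LinearIndependent ℂ ![a, b, c, d]
  · have hhom : ∀ i, (![a,b,c,d] i).IsHomogeneous 1 := by
      intro i
      fin_cases i <;> assumption
    obtain ⟨v0, hv0⟩ := exists_dual ![a,b,c,d] hhom hli 0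
    obtain ⟨v1, hv1⟩ := exists_dual ![a,b,c,d] hhom hli 1
    obtain ⟨v2, hv2⟩ := exists_dual ![a,b,c,d] hhom hli 2
    obtain ⟨v3, hv3⟩ := exists_dual ![a,b,c,d] hhom hli 3
    have e00 : dv v0 a = 1 := by simpa using hv0 0
    have e01 : dv v0 b = 0 := by simpa using hv0 1
    have e02 : dv v0 c = 0 := by simpa using hv0 2
    have e03 : dv v0 d = 0 := by simpa using hv0 3
    have e10 : dv v1 a = 0 := by simpa using hv1 0
    have e11 : dv v1 b = 1 := by simpa using hv1 1
    have e12 : dv v1 c = 0 := by simpa using hv1 2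
    have e13 : dv v1 d = 0 := by simpa using hv1 3
    have e20 : dv v2 a = 0 := by simpa using hv2 0
    have e21 : dv v2 b = 0 := by simpa using hv2 1
    have e22 : dv v2 c = 1 := by simpa using hv2 2
    have e23 : dv v2 d = 0 := by simpa using hv2 3
    have e30 : dv v3 a = 0 := by simpa using hv3 0
    have e31 : dv v3 b = 0 := by simpa using hv3 1
    have e32 : dv v3 c = 0 := by simpa using hv3 2
    have e33 : dv v3 d = 1 := by simpa using hv3 3
    have hbW : b ∈ W (a*b + c*d) := by
      have : dv v0 (a*b + c*d) = b := by
        rw [dv_add, dv_mul, dv_mul, e00, e01, e02, e03]; simp only [one_mul, mul_one, zero_mul, mul_zero, add_zero, zero_add]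
      have hm := dv_mem_W v0 (a*b + c*d)
      rwa [this] at hm
    have haW : a ∈ W (a*b + c*d) := by
      have : dv v1 (a*b + c*d) = a := by
        rw [dv_add, dv_mul, dv_mul, e10, e11, e12, e13]; simp only [one_mul, mul_one, zero_mul, mul_zero, add_zero, zero_add]
      have hm := dv_mem_W v1 (a*b + c*d)
      rwa [this] at hm
    have hdW : d ∈ W (a*b + c*d) := by
      have : dv v2 (a*b + c*d) = d := by
        rw [dv_add, dv_mul, dv_mul, e20, e21, e22, e23]; simp only [one_mul, mul_one, zero_mul, mul_zero, add_zero, zero_add]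
      have hm := dv_mem_W v2 (a*b + c*d)
      rwa [this] at hm
    have hcW : c ∈ W (a*b + c*d) := by
      have : dv v3 (a*b + c*d) = c := by
        rw [dv_add, dv_mul, dv_mul, e30, e31, e32, e33]; simp only [one_mul, mul_one, zero_mul, mul_zero, add_zero, zero_add]
      have hm := dv_mem_W v3 (a*b + c*d)
      rwa [this] at hm
    rw [Submodule.span_le]
    rintro x hx
    simp only [Set.mem_insert_iff, Set.mem_singleton_iff] at hx
    rcases hx with rfl | rfl | rfl | rfl <;> assumption
  · obtain ⟨g, hgsum, i, hgi⟩ := Fintype.not_linearIndependent_iff.1 hli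
    simp only [Fin.sum_univ_four, Matrix.cons_val_zero, Matrix.cons_val_one, Matrix.head_cons,
      Matrix.cons_val_two, Matrix.tail_cons, Matrix.cons_val_three] at hgsum
    have hor : g 0 ≠ 0 ∨ g 1 ≠ 0 ∨ g 2 ≠ 0 ∨ g 3 ≠ 0 := by
      fin_cases i
      · exact Or.inl hgi
      · exact Or.inr (Or.inl hgi)
      · exact Or.inr (Or.inr (Or.inl hgi))
      · exact Or.inr (Or.inr (Or.inr hgi))
    have hspan : ∀ {x y z w : Poly n}, w ∈ Submodule.span ℂ ({x,y,z} : Set (Poly n)) →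
        ({a,b,c,d} : Set (Poly n)) ⊆ ({x,y,z,w} : Set (Poly n)) →
        Submodule.span ℂ ({a,b,c,d} : Set (Poly n)) ≤ Submodule.span ℂ ({x,y,z} : Set (Poly n)) := by
      intro x y z w hw hsub
      rw [Submodule.span_le]
      intro u hu
      rcases hsub hu with h | h | h | h
      · exact h ▸ Submodule.subset_span (by simp)
      · exact h ▸ Submodule.subset_span (by simp)
      · exact h ▸ Submodule.subset_span (by simp [Set.mem_insert_iff])
      · exact h ▸ hw
    rcases hor with hg | hg | hg | hg
    · -- a = u•b + v•c + w•d
      have hae := solve4 hgsum hg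
      set u := -((g 0)⁻¹ * g 1) with hu
      set v := -((g 0)⁻¹ * g 2) with hv
      set w := -((g 0)⁻¹ * g 3) with hw
      have E : a*b + c*d = c*d + v•(c*b) + w•(d*b) + u•(b*b) := by
        rw [hae]
        simp only [smul_eq_C_mul, map_add, map_mul, map_neg]
        ring
      rw [E] at hirr ⊢
      refine le_trans (hspan (x := c) (y := d) (z := b) (w := a) ?_ ?_)
        (core3 c d b hc hd hb v w u hirr)
      · rw [hae]
        refine Submodule.add_mem _ (Submodule.add_mem _ ?_ ?_) ?_ <;>
          exact Submodule.smul_mem _ _ (Submodule.subset_span (by simp [Set.mem_insert_iff]))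
      · intro t ht
        simp only [Set.mem_insert_iff, Set.mem_singleton_iff] at ht ⊢
        tauto
    · -- b = u•a + v•c + w•d
      have h' : g 1 • b + g 0 • a + g 2 • c + g 3 • d = 0 := by rw [← hgsum]; abel
      have hbe := solve4 h' hg
      set u := -((g 1)⁻¹ * g 0) with hu
      set v := -((g 1)⁻¹ * g 2) with hv
      set w := -((g 1)⁻¹ * g 3) with hw
      have E : a*b + c*d = c*d + v•(c*a) + w•(d*a) + u•(a*a) := by
        rw [hbe]
        simp only [smul_eq_C_mul, map_add, map_mul, map_neg]
        ring
      rw [E] at hirr ⊢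
      refine le_trans (hspan (x := c) (y := d) (z := a) (w := b) ?_ ?_)
        (core3 c d a hc hd ha v w u hirr)
      · rw [hbe]
        refine Submodule.add_mem _ (Submodule.add_mem _ ?_ ?_) ?_ <;>
          exact Submodule.smul_mem _ _ (Submodule.subset_span (by simp [Set.mem_insert_iff]))
      · intro t ht
        simp only [Set.mem_insert_iff, Set.mem_singleton_iff] at ht ⊢
        tauto
    · -- c = u•a + v•b + w•d
      have h' : g 2 • c + g 0 • a + g 1 • b + g 3 • d = 0 := by rw [← hgsum]; abel
      have hce := solve4 h' hg
      set u := -((g 2)⁻¹ * g 0) with hu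
      set v := -((g 2)⁻¹ * g 1) with hv
      set w := -((g 2)⁻¹ * g 3) with hw
      have E : a*b + c*d = a*b + u•(a*d) + v•(b*d) + w•(d*d) := by
        rw [hce]
        simp only [smul_eq_C_mul, map_add, map_mul, map_neg]
        ring
      rw [E] at hirr ⊢
      refine le_trans (hspan (x := a) (y := b) (z := d) (w := c) ?_ ?_)
        (core3 a b d ha hb hd u v w hirr)
      · rw [hce]
        refine Submodule.add_mem _ (Submodule.add_mem _ ?_ ?_) ?_ <;>
          exact Submodule.smul_mem _ _ (Submodule.subset_span (by simp [Set.mem_insert_iff]))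
      · intro t ht
        simp only [Set.mem_insert_iff, Set.mem_singleton_iff] at ht ⊢
        tauto
    · -- d = u•a + v•b + w•c
      have h' : g 3 • d + g 0 • a + g 1 • b + g 2 • c = 0 := by rw [← hgsum]; abel
      have hde := solve4 h' hg
      set u := -((g 3)⁻¹ * g 0) with hu
      set v := -((g 3)⁻¹ * g 1) with hv
      set w := -((g 3)⁻¹ * g 2) with hw
      have E : a*b + c*d = a*b + u•(a*c) + v•(b*c) + w•(c*c) := by
        rw [hde]
        simp only [smul_eq_C_mul, map_add, map_mul, map_neg]
        ring
      rw [E] at hirr ⊢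
      refine le_trans (hspan (x := a) (y := b) (z := c) (w := d) ?_ ?_)
        (core3 a b c ha hb hc u v w hirr)
      · rw [hde]
        refine Submodule.add_mem _ (Submodule.add_mem _ ?_ ?_) ?_ <;>
          exact Submodule.smul_mem _ _ (Submodule.subset_span (by simp [Set.mem_insert_iff]))
      · intro t ht
        simp only [Set.mem_insert_iff, Set.mem_singleton_iff] at ht ⊢
        tauto


lemma quadRank_def (Q : Poly n) : quadRank Q = sInf {s : ℕ | ∃ a b : Fin s → Poly n,
    (∀ i, (a i).IsHomogeneous 1) ∧ (∀ i, (b i).IsHomogeneous 1) ∧ Q = ∑ i, a i * b i} := rfl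

lemma rank_one_rep {P : Poly n} (h : quadRank P = 1) :
    ∃ u v : Poly n, u.IsHomogeneous 1 ∧ v.IsHomogeneous 1 ∧ P = u * v := by
  rw [quadRank_def] at h
  have hne : {s : ℕ | ∃ a b : Fin s → Poly n,
      (∀ i, (a i).IsHomogeneous 1) ∧ (∀ i, (b i).IsHomogeneous 1) ∧ P = ∑ i, a i * b i}.Nonempty := by
    by_contra h'
    rw [Set.not_nonempty_iff_eq_empty] at h'
    rw [h', Nat.sInf_empty] at h
    exact zero_ne_one h
  have hmem := Nat.sInf_mem hne
  rw [h] at hmem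
  obtain ⟨a, b, ha, hb, hP⟩ := hmem
  exact ⟨a 0, b 0, ha 0, hb 0, by rw [hP, Fin.sum_univ_one]⟩

lemma quadRank_eq_two {Q u v u' v' : Poly n} (hu : u.IsHomogeneous 1) (hv : v.IsHomogeneous 1)
    (hu' : u'.IsHomogeneous 1) (hv' : v'.IsHomogeneous 1)
    (hirr : Irreducible Q) (hQ : Q = u*v + u'*v') : quadRank Q = 2 := by
  have mem2 : 2 ∈ {s : ℕ | ∃ a b : Fin s → Poly n,
      (∀ i, (a i).IsHomogeneous 1) ∧ (∀ i, (b i).IsHomogeneous 1) ∧ Q = ∑ i, a i * b i} := by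
    refine ⟨![u, u'], ![v, v'], ?_, ?_, ?_⟩
    · intro i; fin_cases i <;> assumption
    · intro i; fin_cases i <;> assumption
    · rw [Fin.sum_univ_two]
      simpa using hQ
  have hle : quadRank Q ≤ 2 := by
    rw [quadRank_def]
    exact Nat.sInf_le mem2
  have hmem := Nat.sInf_mem ⟨2, mem2⟩
  rw [← quadRank_def] at hmem
  have h0 : quadRank Q ≠ 0 := by
    intro h
    rw [h] at hmem
    obtain ⟨a, b, _, _, hP⟩ := hmem
    rw [Finset.univ_eq_empty, Finset.sum_empty] at hP
    rw [hP] at hirr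
    exact not_irreducible_zero hirr
  have h1 : quadRank Q ≠ 1 := by
    intro h
    rw [h] at hmem
    obtain ⟨a, b, ha, hb, hP⟩ := hmem
    rw [Fin.sum_univ_one] at hP
    rw [hP] at hirr
    exact not_irreducible_mul_hom1 (ha 0) (hb 0) hirr
  omega

lemma LinOld_eq (Q : Poly n) (k : ℕ) (hk : quadRank Q = k) :
    LinOld Q = ⨅ (a : Fin k → Poly n) (b : Fin k → Poly n)
      (_ : (∀ i, (a i).IsHomogeneous 1) ∧ (∀ i, (b i).IsHomogeneous 1) ∧ Q = ∑ i, a i * b i),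
      Submodule.span ℂ (Set.range a ∪ Set.range b) := by
  subst hk
  rfl

lemma LinOld_eq_span {Q u₀ v₀ u₁ v₁ : Poly n} (c d : ℂ) (hc : c ≠ 0) (hd : d ≠ 0)
    (hu₀ : u₀.IsHomogeneous 1) (hv₀ : v₀.IsHomogeneous 1)
    (hu₁ : u₁.IsHomogeneous 1) (hv₁ : v₁.IsHomogeneous 1)
    (hirr : Irreducible Q) (hQ : Q = (c•u₀)*v₀ + (d•u₁)*v₁) :
    LinOld Q = Submodule.span ℂ ({u₀, v₀, u₁, v₁} : Set (Poly n)) := by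
  have r2 : quadRank Q = 2 :=
    quadRank_eq_two (hom1_smul hu₀ c) hv₀ (hom1_smul hu₁ d) hv₁ hirr hQ
  set Sgen := Submodule.span ℂ ({u₀, v₀, u₁, v₁} : Set (Poly n)) with hSgen
  have hmemS : ∀ x ∈ ({u₀, v₀, u₁, v₁} : Set (Poly n)), x ∈ Sgen :=
    fun x hx => Submodule.subset_span hx
  -- Sgen ≤ W Q
  have hSW : Sgen ≤ W Q := by
    have hcore : Submodule.span ℂ ({c•u₀, v₀, d•u₁, v₁} : Set (Poly n)) ≤ W Q := by
      have := core (c•u₀) v₀ (d•u₁) v₁ (hom1_smul hu₀ c) hv₀ (hom1_smul hu₁ d) hv₁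
        (hQ ▸ hirr)
      rw [← hQ] at this
      exact this
    refine le_trans ?_ hcore
    rw [hSgen, Submodule.span_le]
    rintro x hx
    simp only [Set.mem_insert_iff, Set.mem_singleton_iff] at hx
    rcases hx with rfl | rfl | rfl | rfl
    · have hmem : c • x ∈ Submodule.span ℂ ({c•x, v₀, d•u₁, v₁} : Set (Poly n)) :=
        Submodule.subset_span (by simp)
      have h2 := Submodule.smul_mem _ c⁻¹ hmem
      rwa [smul_smul, inv_mul_cancel₀ hc, one_smul] at h2
    · exact Submodule.subset_span (by simp)
    · have hmem : d • x ∈ Submodule.span ℂ ({c•u₀, v₀, d•x, v₁} : Set (Poly n)) :=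
        Submodule.subset_span (by simp [Set.mem_insert_iff])
      have h2 := Submodule.smul_mem _ d⁻¹ hmem
      rwa [smul_smul, inv_mul_cancel₀ hd, one_smul] at h2
    · exact Submodule.subset_span (by simp [Set.mem_insert_iff])
  rw [LinOld_eq Q 2 r2]
  apply le_antisymm
  · have habc : (∀ i, ((![c•u₀, d•u₁] : Fin 2 → Poly n) i).IsHomogeneous 1) ∧
        (∀ i, ((![v₀, v₁] : Fin 2 → Poly n) i).IsHomogeneous 1) ∧
        Q = ∑ i, (![c•u₀, d•u₁] : Fin 2 → Poly n) i * (![v₀, v₁] : Fin 2 → Poly n) i := by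
      refine ⟨?_, ?_, ?_⟩
      · intro i; fin_cases i
        · exact hom1_smul hu₀ c
        · exact hom1_smul hu₁ d
      · intro i; fin_cases i <;> assumption
      · rw [Fin.sum_univ_two]
        simpa using hQ
    refine le_trans (le_trans (iInf_le _ ![c•u₀, d•u₁])
      (le_trans (iInf_le _ ![v₀, v₁]) (iInf_le _ habc))) ?_
    rw [Submodule.span_le]
    rintro x (⟨i, rfl⟩ | ⟨i, rfl⟩) <;> fin_cases i
    · exact Submodule.smul_mem _ _ (hmemS _ (by simp))
    · exact Submodule.smul_mem _ _ (hmemS _ (by simp [Set.mem_insert_iff]))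
    · exact hmemS _ (by simp)
    · exact hmemS _ (by simp [Set.mem_insert_iff])
  · refine le_iInf fun a => le_iInf fun b => le_iInf fun hab => ?_
    obtain ⟨ha, hb, hQe⟩ := hab
    refine le_trans hSW ?_
    rw [hQe]
    exact W_le_span a b ha hb

end TwoPencil


open TwoPencil in
/-- If a pencil of two irreducible quadratic forms contains two distinct rank-one members,
then both forms have rank 2 and the same space of linear forms. -/
theorem two_rank_one_members_in_pencil {n : ℕ} (Q₁ Q₂ : MvPolynomial (Fin n) ℂ)
    (hQ₁ : Q₁.IsHomogeneous 2) (hQ₂ : Q₂.IsHomogeneous 2)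
    (hirr₁ : Irreducible Q₁) (hirr₂ : Irreducible Q₂)
    (t₁ t₂ : ℂ) (hne : t₁ ≠ t₂)
    (h₁ : quadRank (Q₁ + t₁ • Q₂) = 1) (h₂ : quadRank (Q₁ + t₂ • Q₂) = 1) :
    quadRank Q₁ = 2 ∧ quadRank Q₂ = 2 ∧ Lin Q₁ = Lin Q₂ := by
  obtain ⟨u₀, v₀, hu₀, hv₀, hP₁⟩ := rank_one_rep h₁
  obtain ⟨u₁, v₁, hu₁, hv₁, hP₂⟩ := rank_one_rep h₂
  have ht₁ : t₁ ≠ 0 := by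
    rintro rfl
    rw [zero_smul, add_zero] at hP₁
    rw [hP₁] at hirr₁
    exact not_irreducible_mul_hom1 hu₀ hv₀ hirr₁
  have ht₂ : t₂ ≠ 0 := by
    rintro rfl
    rw [zero_smul, add_zero] at hP₂
    rw [hP₂] at hirr₁
    exact not_irreducible_mul_hom1 hu₁ hv₁ hirr₁
  have htd : t₂ - t₁ ≠ 0 := sub_ne_zero.2 (Ne.symm hne)
  have htd' : t₁ - t₂ ≠ 0 := sub_ne_zero.2 hne
  set c : ℂ := t₂ / (t₂ - t₁) with hc
  set d : ℂ := -(t₁ / (t₂ - t₁)) with hd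
  have hc0 : c ≠ 0 := div_ne_zero ht₂ htd
  have hd0 : d ≠ 0 := neg_ne_zero.2 (div_ne_zero ht₁ htd)
  set c' : ℂ := (t₁ - t₂)⁻¹ with hc'
  set d' : ℂ := -(t₁ - t₂)⁻¹ with hd'
  have hc'0 : c' ≠ 0 := inv_ne_zero htd'
  have hd'0 : d' ≠ 0 := neg_ne_zero.2 (inv_ne_zero htd')
  have hQ₁e : Q₁ = (c•u₀)*v₀ + (d•u₁)*v₁ := by
    have key : Q₁ = c • (Q₁ + t₁ • Q₂) + d • (Q₁ + t₂ • Q₂) := by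
      match_scalars <;> (simp only [hc, hd]; field_simp; try ring)
    rw [key, hP₁, hP₂, smul_mul_assoc, smul_mul_assoc]
  have hQ₂e : Q₂ = (c'•u₀)*v₀ + (d'•u₁)*v₁ := by
    have key : Q₂ = c' • (Q₁ + t₁ • Q₂) + d' • (Q₁ + t₂ • Q₂) := by
      match_scalars <;> (simp only [hc', hd']; field_simp; try ring)
    rw [key, hP₁, hP₂, smul_mul_assoc, smul_mul_assoc]
  have r₁ : quadRank Q₁ = 2 :=
    quadRank_eq_two (hom1_smul hu₀ c) hv₀ (hom1_smul hu₁ d) hv₁ hirr₁ hQ₁e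
  have r₂ : quadRank Q₂ = 2 :=
    quadRank_eq_two (hom1_smul hu₀ c') hv₀ (hom1_smul hu₁ d') hv₁ hirr₂ hQ₂e
  refine ⟨r₁, r₂, ?_⟩
  have hL₁ : Lin Q₁ = LinOld Q₁ := by
    simp only [Lin, r₁]
    norm_num
  have hL₂ : Lin Q₂ = LinOld Q₂ := by
    simp only [Lin, r₂]
    norm_num
  rw [hL₁, hL₂,
    LinOld_eq_span c d hc0 hd0 hu₀ hv₀ hu₁ hv₁ hirr₁ hQ₁e,
    LinOld_eq_span c' d' hc'0 hd'0 hu₀ hv₀ hu₁ hv₁ hirr₂ hQ₂e]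

end
end

section
/- Let V = V_1 + V_2 be an r-robust vector space in S = ℂ[x_1,…,x_n], with V_1 a subspace of linear forms and V_2 a subspace of quadratic forms. If Q is a quadratic form with rank(Q) < r and Q lies in the subalgebra ℂ[V] generated by V_1 ∪ V_2, then Q ∈ ℂ[V_1]. If P is a quadratic form with rank(P) < r and P lies in the ideal generated by V_1 ∪ V_2, then P lies in the ideal (V_1) generated by V_1. -/
open MvPolynomial

noncomputable section

/-- Component of a product with a homogeneous polynomial. -/
lemma hcomp_mul {n : ℕ} (f p : MvPolynomial (Fin n) ℂ) {m j : ℕ} (hp : p.IsHomogeneous m)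
    (hj : m ≤ j) :
    homogeneousComponent j (f * p) = homogeneousComponent (j - m) f * p := by
  conv_lhs => rw [← sum_homogeneousComponent f, Finset.sum_mul, map_sum]
  have key : ∀ k, homogeneousComponent j (homogeneousComponent k f * p)
      = if k = j - m then homogeneousComponent k f * p else 0 := by
    intro k
    have hk : homogeneousComponent k f * p ∈ homogeneousSubmodule (Fin n) ℂ (k + m) :=
      (mem_homogeneousSubmodule _ _).mpr
        ((homogeneousComponent_isHomogeneous k f).mul hp)
    rw [homogeneousComponent_of_mem hk]
    by_cases h : j = k + m
    · rw [if_pos h, if_pos (by omega)]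
    · rw [if_neg h, if_neg (by omega)]
  rw [Finset.sum_congr rfl fun k _ => key k, Finset.sum_ite_eq' (Finset.range (f.totalDegree + 1))]
  split_ifs with h
  · rfl
  · rw [homogeneousComponent_eq_zero _ f (by simp at h; omega), zero_mul]

lemma comp2_span_V1 {n : ℕ} (V₁ : Submodule ℂ (MvPolynomial (Fin n) ℂ))
    (hV₁ : ∀ v ∈ V₁, v.IsHomogeneous 1) {a : MvPolynomial (Fin n) ℂ}
    (ha : a ∈ Ideal.span (V₁ : Set (MvPolynomial (Fin n) ℂ))) :
    homogeneousComponent 2 a ∈ Ideal.span (V₁ : Set (MvPolynomial (Fin n) ℂ)) := by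
  obtain ⟨c, hsupp, rfl⟩ := Submodule.mem_span_set.mp ha
  rw [Finsupp.sum, map_sum]
  refine Submodule.sum_mem _ fun v hv => ?_
  rw [smul_eq_mul, hcomp_mul _ _ (hV₁ v (hsupp hv)) one_le_two]
  exact Ideal.mul_mem_left _ _ (Ideal.subset_span (hsupp hv))

lemma comp2_span_V2 {n : ℕ} (V₂ : Submodule ℂ (MvPolynomial (Fin n) ℂ))
    (hV₂ : ∀ q ∈ V₂, q.IsHomogeneous 2) {b : MvPolynomial (Fin n) ℂ}
    (hb : b ∈ Ideal.span (V₂ : Set (MvPolynomial (Fin n) ℂ))) :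
    homogeneousComponent 2 b ∈ V₂ := by
  obtain ⟨c, hsupp, rfl⟩ := Submodule.mem_span_set.mp hb
  rw [Finsupp.sum, map_sum]
  refine Submodule.sum_mem _ fun q hq => ?_
  rw [smul_eq_mul, hcomp_mul _ _ (hV₂ q (hsupp hq)) le_rfl]
  rw [Nat.sub_self, homogeneousComponent_zero, C_mul']
  exact V₂.smul_mem _ (hsupp hq)

lemma degree_two_split {n : ℕ} (d : Fin n →₀ ℕ) (h : (Finsupp.weight (1 : Fin n → ℕ)) d = 2) :
    ∃ i j : Fin n, d = Finsupp.single i 1 + Finsupp.single j 1 := by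
  have hc : Multiset.card (Finsupp.toMultiset d) = 2 := by
    rw [Finsupp.card_toMultiset]
    rw [Finsupp.weight_apply] at h
    simpa [Finsupp.sum] using h
  obtain ⟨i, j, hij⟩ := Multiset.card_eq_two.mp hc
  refine ⟨i, j, ?_⟩
  have := Finsupp.toMultiset_toFinsupp d
  rw [← this, hij, Multiset.insert_eq_cons, ← Multiset.singleton_add, map_add,
    Multiset.toFinsupp_singleton, Multiset.toFinsupp_singleton]

lemma exists_quad_decomp {n : ℕ} {P : MvPolynomial (Fin n) ℂ} (hP : P.IsHomogeneous 2) :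
    ∃ (s : ℕ) (a b : Fin s → MvPolynomial (Fin n) ℂ),
      (∀ i, (a i).IsHomogeneous 1) ∧ (∀ i, (b i).IsHomogeneous 1) ∧ P = ∑ i, a i * b i := by
  classical
  set s := P.support.card with hs
  let e : {d // d ∈ P.support} ≃ Fin s := P.support.equivFin
  let d : Fin s → (Fin n →₀ ℕ) := fun i => (e.symm i : Fin n →₀ ℕ)
  have hd : ∀ i, ∃ pq : Fin n × Fin n,
      d i = Finsupp.single pq.1 1 + Finsupp.single pq.2 1 := by
    intro i
    obtain ⟨x, y, hxy⟩ := degree_two_split (d i) (hP (mem_support_iff.mp (e.symm i).2))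
    exact ⟨(x, y), hxy⟩
  refine ⟨s, fun i => C (coeff (d i) P) * X (Classical.choose (hd i)).1,
    fun i => X (Classical.choose (hd i)).2, fun i => (isHomogeneous_X _ _).C_mul _,
    fun i => isHomogeneous_X _ _, ?_⟩
  have key : ∀ i, (C (coeff (d i) P) * X (Classical.choose (hd i)).1) *
      X (Classical.choose (hd i)).2 = monomial (d i) (coeff (d i) P) := by
    intro i
    have hspec := Classical.choose_spec (hd i)
    rw [mul_assoc, X, X, monomial_mul, one_mul, C_mul_monomial, mul_one, ← hspec]
  rw [Finset.sum_congr rfl fun i _ => key i]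
  have h1 := Equiv.sum_comp e.symm
    (fun x : {u // u ∈ P.support} => monomial (x : Fin n →₀ ℕ) (coeff (x : Fin n →₀ ℕ) P))
  refine Eq.symm (h1.trans ?_)
  rw [Finset.sum_coe_sort P.support (fun u => monomial u (coeff u P)),
    support_sum_monomial_coeff]

lemma adjoin_decomp {n : ℕ} (V₁ V₂ : Submodule ℂ (MvPolynomial (Fin n) ℂ))
    (hV₁ : ∀ v ∈ V₁, v.IsHomogeneous 1) (hV₂ : ∀ q ∈ V₂, q.IsHomogeneous 2)
    {Q : MvPolynomial (Fin n) ℂ} (hQ : Q.IsHomogeneous 2)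
    (hmem : Q ∈ Algebra.adjoin ℂ ((V₁ : Set (MvPolynomial (Fin n) ℂ)) ∪ V₂)) :
    ∃ q ∈ V₂, ∃ F ∈ V₁ * V₁, Q = q + F := by
  have hspan : Q ∈ Submodule.span ℂ
      ((Submonoid.closure ((V₁ : Set (MvPolynomial (Fin n) ℂ)) ∪ V₂) : Submonoid _) :
        Set (MvPolynomial (Fin n) ℂ)) := by
    rw [← Algebra.adjoin_eq_span]; exact hmem
  have hmono : ∀ m ∈ Submonoid.closure ((V₁ : Set (MvPolynomial (Fin n) ℂ)) ∪ V₂),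
      homogeneousComponent 2 m ∈ V₂ ⊔ V₁ * V₁ := by
    intro m hm
    have claim : ∃ dd : ℕ, m ∈ homogeneousSubmodule (Fin n) ℂ dd ∧
        (dd = 0 → m ∈ Submodule.span ℂ {(1 : MvPolynomial (Fin n) ℂ)}) ∧
        (dd = 1 → m ∈ V₁) ∧ (dd = 2 → m ∈ V₂ ⊔ V₁ * V₁) := by
      induction hm using Submonoid.closure_induction with
      | mem z hz =>
        rcases hz with hz | hz
        · exact ⟨1, (mem_homogeneousSubmodule _ _).mpr (hV₁ z hz), by omega,
            fun _ => hz, by omega⟩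
        · exact ⟨2, (mem_homogeneousSubmodule _ _).mpr (hV₂ z hz), by omega, by omega,
            fun _ => Submodule.mem_sup_left hz⟩
      | one =>
        exact ⟨0, (mem_homogeneousSubmodule _ _).mpr (isHomogeneous_one _ _),
          fun _ => Submodule.mem_span_singleton_self 1, by omega, by omega⟩
      | mul x y hx hy ihx ihy =>
        obtain ⟨dx, hxh, hx0, hx1, hx2⟩ := ihx
        obtain ⟨dy, hyh, hy0, hy1, hy2⟩ := ihy
        refine ⟨dx + dy, (mem_homogeneousSubmodule _ _).mpr
          (((mem_homogeneousSubmodule _ _).mp hxh).mul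
            ((mem_homogeneousSubmodule _ _).mp hyh)), ?_, ?_, ?_⟩
        · intro h0
          obtain ⟨cx, hcx⟩ := Submodule.mem_span_singleton.mp (hx0 (by omega))
          obtain ⟨cy, hcy⟩ := Submodule.mem_span_singleton.mp (hy0 (by omega))
          refine Submodule.mem_span_singleton.mpr ⟨cx * cy, ?_⟩
          rw [← hcx, ← hcy, smul_mul_smul_comm, mul_one]
        · intro h1
          rcases Nat.eq_zero_or_pos dx with h | h
          · obtain ⟨cx, hcx⟩ := Submodule.mem_span_singleton.mp (hx0 h)
            have : x * y = cx • y := by rw [← hcx, smul_mul_assoc, one_mul]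
            rw [this]; exact V₁.smul_mem _ (hy1 (by omega))
          · have hdy : dy = 0 := by omega
            obtain ⟨cy, hcy⟩ := Submodule.mem_span_singleton.mp (hy0 hdy)
            have : x * y = cy • x := by rw [← hcy, mul_smul_comm, mul_one]
            rw [this]; exact V₁.smul_mem _ (hx1 (by omega))
        · intro h2
          rcases Nat.eq_zero_or_pos dx with h | h
          · obtain ⟨cx, hcx⟩ := Submodule.mem_span_singleton.mp (hx0 h)
            have : x * y = cx • y := by rw [← hcx, smul_mul_assoc, one_mul]
            rw [this]; exact Submodule.smul_mem _ _ (hy2 (by omega))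
          · rcases Nat.eq_zero_or_pos dy with h' | h'
            · obtain ⟨cy, hcy⟩ := Submodule.mem_span_singleton.mp (hy0 h')
              have : x * y = cy • x := by rw [← hcy, mul_smul_comm, mul_one]
              rw [this]; exact Submodule.smul_mem _ _ (hx2 (by omega))
            · have hdx : dx = 1 := by omega
              have hdy : dy = 1 := by omega
              exact Submodule.mem_sup_right
                (Submodule.mul_mem_mul (hx1 hdx) (hy1 hdy))
    obtain ⟨dd, hmh, _, _, h2⟩ := claim
    rw [homogeneousComponent_of_mem hmh]
    split_ifs with h
    · exact h2 h.symm
    · exact zero_mem _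
  have key : ∀ x ∈ Submodule.span ℂ
      ((Submonoid.closure ((V₁ : Set (MvPolynomial (Fin n) ℂ)) ∪ V₂) : Submonoid _) :
        Set (MvPolynomial (Fin n) ℂ)),
      homogeneousComponent 2 x ∈ V₂ ⊔ V₁ * V₁ := by
    intro x hx
    induction hx using Submodule.span_induction with
    | mem z hz => exact hmono z hz
    | zero => rw [map_zero]; exact zero_mem _
    | add x y _ _ hx hy => rw [map_add]; exact add_mem hx hy
    | smul c x _ hx => rw [map_smul]; exact Submodule.smul_mem _ _ hx
  have hQ2 := key Q hspan
  rw [homogeneousComponent_of_mem ((mem_homogeneousSubmodule _ _).mpr hQ),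
    if_pos rfl] at hQ2
  obtain ⟨q, hq, F, hF, hqF⟩ := Submodule.mem_sup.mp hQ2
  exact ⟨q, hq, F, hF, hqF.symm⟩

/-- The rank of the image of `Q` in the quotient polynomial ring `S/(V₁)`: the smallest `s`
such that `Q` is congruent, modulo the ideal generated by `V₁`, to a sum of `s` products of
linear forms. -/
def quadRankMod {n : ℕ} (V₁ : Submodule ℂ (MvPolynomial (Fin n) ℂ))
    (Q : MvPolynomial (Fin n) ℂ) : ℕ :=
  sInf {s : ℕ | ∃ a b : Fin s → MvPolynomial (Fin n) ℂ,
    (∀ i, (a i).IsHomogeneous 1) ∧ (∀ i, (b i).IsHomogeneous 1) ∧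
    Q - ∑ i, a i * b i ∈ Ideal.span (V₁ : Set (MvPolynomial (Fin n) ℂ))}

/-- A graded vector space `V = V₁ + V₂` (`V₁` linear forms, `V₂` quadratic forms) is
`r`-robust if every nonzero `Q ∈ V₂` satisfies: (1) `rank (Q − F) ≥ r` for every degree-2
element `F` of `ℂ[V₁]`; (2) if `Q ∉ (V₁)` then the image of `Q` in `S/(V₁)` has rank `≥ r`. -/
def IsRobust {n : ℕ} (r : ℕ) (V₁ V₂ : Submodule ℂ (MvPolynomial (Fin n) ℂ)) : Prop :=
  ∀ Q ∈ V₂, Q ≠ 0 →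
    (∀ F ∈ Algebra.adjoin ℂ (V₁ : Set (MvPolynomial (Fin n) ℂ)),
      F.IsHomogeneous 2 → r ≤ quadRank (Q - F)) ∧
    (Q ∉ Ideal.span (V₁ : Set (MvPolynomial (Fin n) ℂ)) → r ≤ quadRankMod V₁ Q)

/-- Low-rank quadratics in a robust algebra (resp. ideal) lie in the algebra (resp. ideal)
generated by the linear part. -/
theorem low_rank_in_robust {n : ℕ} (r : ℕ)
    (V₁ V₂ : Submodule ℂ (MvPolynomial (Fin n) ℂ))
    (hV₁ : ∀ v ∈ V₁, v.IsHomogeneous 1) (hV₂ : ∀ q ∈ V₂, q.IsHomogeneous 2)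
    (hrob : IsRobust r V₁ V₂) :
    (∀ Q : MvPolynomial (Fin n) ℂ, Q.IsHomogeneous 2 → quadRank Q < r →
      Q ∈ Algebra.adjoin ℂ ((V₁ : Set (MvPolynomial (Fin n) ℂ)) ∪ V₂) →
      Q ∈ Algebra.adjoin ℂ (V₁ : Set (MvPolynomial (Fin n) ℂ))) ∧
    (∀ P : MvPolynomial (Fin n) ℂ, P.IsHomogeneous 2 → quadRank P < r →
      P ∈ Ideal.span ((V₁ : Set (MvPolynomial (Fin n) ℂ)) ∪ V₂) →
      P ∈ Ideal.span (V₁ : Set (MvPolynomial (Fin n) ℂ))) := by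
  constructor
  · intro Q hQ hrank hmem
    obtain ⟨q, hqV, F, hFmul, rfl⟩ := adjoin_decomp V₁ V₂ hV₁ hV₂ hQ hmem
    have hF2 : F.IsHomogeneous 2 := by
      have hle : V₁ * V₁ ≤ homogeneousSubmodule (Fin n) ℂ 2 :=
        Submodule.mul_le.mpr fun a ha b hb =>
          (mem_homogeneousSubmodule _ _).mpr ((hV₁ a ha).mul (hV₁ b hb))
      exact (mem_homogeneousSubmodule _ _).mp (hle hFmul)
    have hFadj : F ∈ Algebra.adjoin ℂ (V₁ : Set (MvPolynomial (Fin n) ℂ)) := by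
      have hle : V₁ * V₁ ≤ Subalgebra.toSubmodule
          (Algebra.adjoin ℂ (V₁ : Set (MvPolynomial (Fin n) ℂ))) :=
        Submodule.mul_le.mpr fun a ha b hb =>
          (Subalgebra.mem_toSubmodule _).mpr
            (mul_mem (Algebra.subset_adjoin ha) (Algebra.subset_adjoin hb))
      exact hle hFmul
    by_cases hq0 : q = 0
    · rw [hq0, zero_add]; exact hFadj
    · exfalso
      have hneg : (-F).IsHomogeneous 2 :=
        (mem_homogeneousSubmodule _ _).mp
          ((homogeneousSubmodule (Fin n) ℂ 2).neg_mem ((mem_homogeneousSubmodule _ _).mpr hF2))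
      have hge := (hrob q hqV hq0).1 (-F) (neg_mem hFadj) hneg
      rw [sub_neg_eq_add] at hge
      omega
  · intro P hP hrank hmem
    rw [Ideal.span_union] at hmem
    obtain ⟨a, ha, b, hb, hab⟩ := Submodule.mem_sup.mp hmem
    have hq : homogeneousComponent 2 b ∈ V₂ := comp2_span_V2 V₂ hV₂ hb
    have haI : homogeneousComponent 2 a ∈ Ideal.span (V₁ : Set (MvPolynomial (Fin n) ℂ)) :=
      comp2_span_V1 V₁ hV₁ ha
    set q := homogeneousComponent 2 b with hqdef
    have hPeq : P = homogeneousComponent 2 a + q := by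
      have h1 : homogeneousComponent 2 P = P := by
        rw [homogeneousComponent_of_mem ((mem_homogeneousSubmodule _ _).mpr hP), if_pos rfl]
      rw [← h1, ← hab, map_add]
    have hPq : P - q ∈ Ideal.span (V₁ : Set (MvPolynomial (Fin n) ℂ)) := by
      rw [hPeq, add_sub_cancel_right]; exact haI
    by_cases hq0 : q = 0
    · rw [hPeq, hq0, add_zero]; exact haI
    by_cases hqI : q ∈ Ideal.span (V₁ : Set (MvPolynomial (Fin n) ℂ))
    · have := add_mem hPq hqI
      rwa [sub_add_cancel] at this
    exfalso
    have hr := (hrob q hq hq0).2 hqI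
    have hmemset : quadRank P ∈ {s : ℕ | ∃ a b : Fin s → MvPolynomial (Fin n) ℂ,
        (∀ i, (a i).IsHomogeneous 1) ∧ (∀ i, (b i).IsHomogeneous 1) ∧ P = ∑ i, a i * b i} := by
      obtain ⟨s, a', b', h1, h2, h3⟩ := exists_quad_decomp hP
      exact Nat.sInf_mem ⟨s, a', b', h1, h2, h3⟩
    obtain ⟨a', b', h1, h2, h3⟩ := hmemset
    have hle : quadRankMod V₁ q ≤ quadRank P := by
      refine Nat.sInf_le ⟨a', b', h1, h2, ?_⟩
      rw [← h3]
      have : q - P = -(P - q) := by ring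
      rw [this]
      exact neg_mem hPq
    omega


end
end

section
/- Let U be a finite set with |U| ≤ n, let 0 < ν < 1, and let S_1, …, S_t be subsets of U with |S_i| ≥ νn for each i ∈ [t]. Then there exists a subset H ⊆ [t] with |H| ≤ 2/ν such that for every i ∈ [t], the intersection of S_i with the union ⋃_{j∈H} S_j has size at least νn/2; in particular, for every i ∈ [t] there exists j ∈ H such that |S_i ∩ S_j| ≥ ν²n/4. -/
/-!
Let `c = νn/2` and take `H` of maximal size among the subfamilies with `c|H| ≤ |⋃_{j∈H} S_j|`.
Since the union lies in `U`, `c|H| ≤ n`, i.e. `|H| ≤ 2/ν`. If some `S_i` met the union in fewer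
than `c` points, adding `i` would grow the union by more than `|S_i| - c ≥ c`, contradicting
maximality. Finally `S_i ∩ ⋃_{j∈H} S_j` is covered by the `|H|` sets `S_i ∩ S_j`, so one of them
has at least `c/|H| ≥ cν/2 = ν²n/4` elements.
-/

open Finset

namespace Finset

variable {ι α : Type*} [DecidableEq α]

theorem exists_le_card_inter_biUnion [Fintype ι] [DecidableEq ι] (S : ι → Finset α) {c : ℝ}
    (hS : ∀ i, 2 * c ≤ #(S i)) :
    ∃ H : Finset ι, c * #H ≤ #(H.biUnion S) ∧ ∀ i, c ≤ #(S i ∩ H.biUnion S) := by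
  let 𝒢 := univ.filter fun H : Finset ι => c * #H ≤ #(H.biUnion S)
  obtain ⟨H, hH𝒢, hmax⟩ := exists_max_image 𝒢 card ⟨∅, by simp [𝒢]⟩
  have hH : c * #H ≤ #(H.biUnion S) := (mem_filter.mp hH𝒢).2
  refine ⟨H, hH, fun i => ?_⟩
  by_contra! hlt
  have hiH : i ∉ H := fun hi => by
    rw [inter_eq_left.mpr (subset_biUnion_of_mem S hi)] at hlt
    linarith [hS i]
  have hunion : #((insert i H).biUnion S) + #(S i ∩ H.biUnion S) = #(S i) + #(H.biUnion S) := by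
    rw [biUnion_insert]
    exact card_union_add_card_inter _ _
  have hins : insert i H ∈ 𝒢 := by
    have hunion' : (#((insert i H).biUnion S) : ℝ) + #(S i ∩ H.biUnion S)
        = #(S i) + #(H.biUnion S) := by exact_mod_cast hunion
    simp only [𝒢, mem_filter, mem_univ, true_and, card_insert_of_notMem hiH]
    push_cast
    linarith [hS i]
  have := hmax _ hins
  rw [card_insert_of_notMem hiH] at this
  omega

theorem exists_le_card_inter_of_le_card_inter_biUnion {s : Finset α} {S : ι → Finset α}
    {H : Finset ι} (hH : H.Nonempty) {c : ℝ} (h : c ≤ #(s ∩ H.biUnion S)) :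
    ∃ j ∈ H, c / #H ≤ #(s ∩ S j) := by
  have hHpos : (0 : ℝ) < #H := by exact_mod_cast hH.card_pos
  apply exists_le_of_sum_le hH
  calc ∑ _ ∈ H, c / #H = c := by rw [sum_const, nsmul_eq_mul, mul_div_cancel₀ _ hHpos.ne']
    _ ≤ #(s ∩ H.biUnion S) := h
    _ ≤ ∑ j ∈ H, (#(s ∩ S j) : ℝ) := by
      rw [inter_biUnion]
      exact_mod_cast card_biUnion_le

end Finset

/-- **Basic covering lemma.** Given subsets `S₁, …, S_t` of a finite set `U` with `|U| ≤ n`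
and `|S_i| ≥ νn`, there is a subfamily `H ⊆ [t]` of size at most `2/ν` such that every
`S_i` intersects `⋃_{j ∈ H} S_j` in at least `νn/2` elements; in particular every `S_i`
has intersection of size at least `ν²n/4` with some `S_j`, `j ∈ H`. -/
theorem basic_covering_lemma {α : Type*} [DecidableEq α]
    (U : Finset α) (n : ℕ) (hU : U.card ≤ n)
    (ν : ℝ) (hν0 : 0 < ν) (hν1 : ν < 1)
    (t : ℕ) (S : Fin t → Finset α)
    (hsub : ∀ i, S i ⊆ U) (hsize : ∀ i, ν * n ≤ ((S i).card : ℝ)) :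
    ∃ H : Finset (Fin t), (H.card : ℝ) ≤ 2 / ν ∧
      ∀ i : Fin t,
        ν * n / 2 ≤ (((S i) ∩ H.biUnion S).card : ℝ) ∧
        ∃ j ∈ H, ν ^ 2 * n / 4 ≤ (((S i) ∩ (S j)).card : ℝ) := by
  -- For `n = 0` all bounds are trivial, but `H` must still be nonempty to supply `j`.
  rcases Nat.eq_zero_or_pos n with rfl | hn
  · cases t with
    | zero => exact ⟨∅, by simp; positivity, fun i => i.elim0⟩
    | succ t =>
      refine ⟨{0}, ?_, fun i => ⟨by simp, 0, by simp, by simp⟩⟩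
      simpa using (one_le_div hν0).mpr (by linarith)
  have hc : 0 < ν * n / 2 := by positivity
  obtain ⟨H, hHS, hcover⟩ := exists_le_card_inter_biUnion S (c := ν * n / 2) fun i => by
    linarith [hsize i]
  have hHU : (#(H.biUnion S) : ℝ) ≤ n := by
    exact_mod_cast ((card_le_card (biUnion_subset.mpr fun j _ => hsub j)).trans hU)
  have hHcard : (#H : ℝ) ≤ 2 / ν := by
    rw [le_div_iff₀ hν0]
    nlinarith
  refine ⟨H, hHcard, fun i => ⟨hcover i, ?_⟩⟩
  have hH : H.Nonempty := nonempty_iff_ne_empty.mpr fun h => by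
    simpa [h] using (hc.trans_le (hcover i))
  obtain ⟨j, hj, hij⟩ := exists_le_card_inter_of_le_card_inter_biUnion hH (hcover i)
  refine ⟨j, hj, le_trans ?_ hij⟩
  rw [le_div_iff₀ (by exact_mod_cast hH.card_pos)]
  nlinarith [mul_le_mul_of_nonneg_left ((le_div_iff₀ hν0).mp hHcard) hc.le]
end

section
/- Let U be a finite set with |U| ≤ n, let 0 < ν < 1, and let S_1, …, S_t be subsets of U with |S_i| ≥ νn for each i ∈ [t]. Then there exist h ≤ 2/ν and subsets H, H_1, …, H_h of [t] such that: (1) |H| = h and H satisfies the conclusion of the basic covering property, i.e., for every i ∈ [t], |S_i ∩ ⋃_{j∈H} S_j| ≥ νn/2; (2) |H_i| ≤ 8/ν for each i ∈ [h]; (3) H is disjoint from ⋃_{j∈[h]} H_j; and (4) writing H = {i_1, …, i_h}, for every k ∈ [t] with k ∉ H ∪ ⋃_{a∈[h]} H_a, there exist a ∈ [h] and j ∈ H_a such that |S_{i_a} ∩ S_j ∩ S_k| ≥ ν³n/4³. -/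
open Finset

set_option maxHeartbeats 1600000 in
/-- **Double covering lemma.** Given subsets `S₁, …, S_t` of a finite set `U` with
`|U| ≤ n` and `|S_i| ≥ νn`, there exist a subfamily `H ⊆ [t]` with `|H| ≤ 2/ν` (satisfying
the basic covering property), and for each `i ∈ H` a subfamily `H_i ⊆ [t]` with
`|H_i| ≤ 8/ν`, such that `H` is disjoint from `⋃_{i ∈ H} H_i`, and every index
`k ∉ H ∪ ⋃_{i ∈ H} H_i` admits `i ∈ H` and `j ∈ H_i` with
`|S_i ∩ S_j ∩ S_k| ≥ ν³n/4³`. -/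
theorem double_covering_lemma {α : Type*} [DecidableEq α]
    (U : Finset α) (n : ℕ) (hU : U.card ≤ n)
    (ν : ℝ) (hν0 : 0 < ν) (hν1 : ν < 1)
    (t : ℕ) (S : Fin t → Finset α)
    (hsub : ∀ i, S i ⊆ U) (hsize : ∀ i, ν * n ≤ ((S i).card : ℝ)) :
    ∃ (H : Finset (Fin t)) (HH : Fin t → Finset (Fin t)),
      -- (1) `|H| ≤ 2/ν` and `H` satisfies the basic covering property
      (H.card : ℝ) ≤ 2 / ν ∧
      (∀ i : Fin t, ν * n / 2 ≤ (((S i) ∩ H.biUnion S).card : ℝ)) ∧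
      -- (2) each `H_i` has size at most `8/ν`
      (∀ i ∈ H, ((HH i).card : ℝ) ≤ 8 / ν) ∧
      -- (3) `H` is disjoint from the union of the `H_i`
      Disjoint H (H.biUnion HH) ∧
      -- (4) triple-intersection property for all remaining indices
      (∀ k : Fin t, k ∉ H ∪ H.biUnion HH →
        ∃ i ∈ H, ∃ j ∈ HH i,
          ν ^ 3 * n / 4 ^ 3 ≤ (((S i) ∩ (S j) ∩ (S k)).card : ℝ)) := by
  classical
  rcases Nat.eq_zero_or_pos n with rfl | hn
  · -- degenerate case n = 0 : all bounds are zero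
    have h2ν : (1 : ℝ) ≤ 2 / ν := by
      rw [le_div_iff₀ hν0]; linarith
    have h8ν : (1 : ℝ) ≤ 8 / ν := by
      rw [le_div_iff₀ hν0]; linarith
    rcases Nat.eq_zero_or_pos t with rfl | ht
    · refine ⟨∅, fun _ => ∅, ?_, ?_, ?_, ?_, ?_⟩
      · simp
        positivity
      · exact fun i => i.elim0
      · simp
      · simp
      · exact fun k => k.elim0
    rcases Nat.lt_or_ge t 2 with ht2 | ht2
    · -- t = 1
      refine ⟨{⟨0, ht⟩}, fun _ => ∅, ?_, ?_, ?_, ?_, ?_⟩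
      · simpa using h2ν
      · intro i; simp
      · intro i _; simp
        positivity
      · simp
      · intro k hk
        exfalso
        apply hk
        have : k = ⟨0, ht⟩ := by omega
        simp [this]
    · -- t ≥ 2
      refine ⟨{⟨0, by omega⟩}, fun _ => {⟨1, by omega⟩}, ?_, ?_, ?_, ?_, ?_⟩
      · simpa using h2ν
      · intro i; simp
      · intro i _; simpa using h8ν
      · simp only [singleton_biUnion]
        rw [disjoint_singleton_left]
        simp only [mem_singleton]
        intro h
        have : (0 : ℕ) = 1 := congrArg Fin.val h
        omega
      · intro k _
        refine ⟨⟨0, by omega⟩, mem_singleton_self _, ⟨1, by omega⟩, mem_singleton_self _, ?_⟩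
        simp only [Nat.cast_zero, mul_zero, zero_div]
        positivity
  -- main case: n ≥ 1
  have hνn : (0 : ℝ) < ν * n := by
    have : (0 : ℝ) < (n : ℝ) := by exact_mod_cast hn
    positivity
  have hn' : (0 : ℝ) < (n : ℝ) := by exact_mod_cast hn
  -- Step A : greedy basic cover H
  set P : Finset (Fin t) → Prop :=
    fun H => ∑ j ∈ H, ((S j).card : ℝ) ≤ 2 * ((H.biUnion S).card : ℝ) with hP
  have hPempty : (∅ : Finset (Fin t)) ∈ univ.filter P := by
    simp [hP]
  obtain ⟨H, hHmem, hHmax⟩ :=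
    Finset.exists_max_image (univ.filter P) (fun H => (H.biUnion S).card) ⟨∅, hPempty⟩
  have hHP : ∑ j ∈ H, ((S j).card : ℝ) ≤ 2 * ((H.biUnion S).card : ℝ) := by
    have := (mem_filter.1 hHmem).2
    simpa [hP] using this
  have hWU : H.biUnion S ⊆ U := biUnion_subset.2 fun j _ => hsub j
  have hWn : (((H.biUnion S).card : ℝ)) ≤ (n : ℝ) := by
    exact_mod_cast le_trans (card_le_card hWU) hU
  -- covering property
  have hcover : ∀ i : Fin t, ν * n / 2 ≤ ((S i ∩ H.biUnion S).card : ℝ) := by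
    intro i
    by_contra hlt
    push_neg at hlt
    have hiH : i ∉ H := by
      intro hi
      have hSiW : S i ∩ H.biUnion S = S i :=
        inter_eq_left.2 (subset_biUnion_of_mem S hi)
      rw [hSiW] at hlt
      have := hsize i
      linarith
    have hunion : ((insert i H).biUnion S) = S i ∪ H.biUnion S := biUnion_insert
    have hcard : ((S i ∪ H.biUnion S).card : ℝ)
        = ((S i).card : ℝ) + ((H.biUnion S).card : ℝ) - ((S i ∩ H.biUnion S).card : ℝ) := by
      have h := Finset.card_union_add_card_inter (S i) (H.biUnion S)
      have h' : (((S i ∪ H.biUnion S).card : ℝ)) + ((S i ∩ H.biUnion S).card : ℝ)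
          = ((S i).card : ℝ) + ((H.biUnion S).card : ℝ) := by exact_mod_cast h
      linarith
    have hP' : (insert i H) ∈ univ.filter P := by
      rw [mem_filter]
      refine ⟨mem_univ _, ?_⟩
      show ∑ j ∈ insert i H, ((S j).card : ℝ) ≤ 2 * (((insert i H).biUnion S).card : ℝ)
      rw [Finset.sum_insert hiH, hunion, hcard]
      have := hsize i
      linarith
    have hle : (((insert i H).biUnion S).card : ℕ) ≤ ((H.biUnion S).card : ℕ) :=
      hHmax _ hP'
    have hle' : (((insert i H).biUnion S).card : ℝ) ≤ ((H.biUnion S).card : ℝ) := by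
      exact_mod_cast hle
    rw [hunion, hcard] at hle'
    have := hsize i
    linarith
  -- |H| ≤ 2/ν
  have hHsum : (H.card : ℝ) * (ν * n) ≤ ∑ j ∈ H, ((S j).card : ℝ) := by
    calc (H.card : ℝ) * (ν * n) = ∑ _j ∈ H, ν * n := by
          rw [Finset.sum_const, nsmul_eq_mul]
      _ ≤ ∑ j ∈ H, ((S j).card : ℝ) := Finset.sum_le_sum fun j _ => hsize j
  have hsum2n : ∑ j ∈ H, ((S j).card : ℝ) ≤ 2 * n := by linarith
  have hHcard : (H.card : ℝ) ≤ 2 / ν := by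
    rw [le_div_iff₀ hν0, ← mul_le_mul_iff_left₀ hn']
    have h1 : (H.card : ℝ) * (ν * n) ≤ 2 * n := le_trans hHsum hsum2n
    have h2 : (H.card : ℝ) * ν * n = (H.card : ℝ) * (ν * n) := by ring
    linarith
  -- Step B : every k ∉ H has a ∈ H with |S k ∩ S a| ≥ (ν/4)|S a|
  have hB : ∀ k : Fin t, k ∉ H →
      ∃ a ∈ H, ν / 4 * ((S a).card : ℝ) ≤ ((S k ∩ S a).card : ℝ) := by
    intro k hk
    by_contra hcon
    push_neg at hcon
    have hHne : H.Nonempty := by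
      rcases H.eq_empty_or_nonempty with h | h
      · exfalso
        have hc := hcover k
        rw [h] at hc
        simp at hc
        linarith
      · exact h
    have hsum : ((S k ∩ H.biUnion S).card : ℝ) ≤ ∑ a ∈ H, ((S k ∩ S a).card : ℝ) := by
      have heq : S k ∩ H.biUnion S = H.biUnion (fun a => S k ∩ S a) := by
        ext x; simp [mem_biUnion]; tauto
      rw [heq]
      exact_mod_cast Finset.card_biUnion_le
    have hlt : ∑ a ∈ H, ((S k ∩ S a).card : ℝ) < ∑ a ∈ H, ν / 4 * ((S a).card : ℝ) :=
      Finset.sum_lt_sum_of_nonempty hHne fun a ha => hcon a ha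
    have hmulsum : ∑ a ∈ H, ν / 4 * ((S a).card : ℝ) = ν / 4 * ∑ a ∈ H, ((S a).card : ℝ) :=
      (Finset.mul_sum _ _ _).symm
    have hc := hcover k
    rw [hmulsum] at hlt
    have h7 : ν / 4 * ∑ a ∈ H, ((S a).card : ℝ) ≤ ν / 4 * (2 * n) :=
      mul_le_mul_of_nonneg_left hsum2n (by positivity)
    have h8 : ν / 4 * (2 * (n:ℝ)) = ν * n / 2 := by ring
    linarith
  -- Step C : for each a, a secondary cover
  have hC : ∀ a : Fin t, ∃ F : Finset (Fin t),
      (∀ j ∈ F, j ∉ H) ∧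
      (F.card : ℝ) ≤ 8 / ν ∧
      (∀ k : Fin t, k ∉ H → ν / 4 * ((S a).card : ℝ) ≤ ((S k ∩ S a).card : ℝ) → k ∉ F →
        ∃ j ∈ F, ν ^ 3 * n / 4 ^ 3 ≤ ((S a ∩ S j ∩ S k).card : ℝ)) := by
    intro a
    have hm : ν * n ≤ ((S a).card : ℝ) := hsize a
    have hm0 : (0 : ℝ) < ((S a).card : ℝ) := lt_of_lt_of_le hνn hm
    set m : ℝ := ((S a).card : ℝ) with hmdef
    set K : Finset (Fin t) :=
      univ.filter (fun k => k ∉ H ∧ ν / 4 * m ≤ ((S k ∩ S a).card : ℝ)) with hK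
    set Q : Finset (Fin t) → Prop :=
      fun F => F ⊆ K ∧ (F.card : ℝ) * (ν * m / 8) ≤ ((F.biUnion (fun j => S j ∩ S a)).card : ℝ)
      with hQ
    have hQempty : (∅ : Finset (Fin t)) ∈ univ.filter Q := by
      simp [hQ]
    obtain ⟨F, hFmem, hFmax⟩ :=
      Finset.exists_max_image (univ.filter Q)
        (fun F => (F.biUnion (fun j => S j ∩ S a)).card) ⟨∅, hQempty⟩
    have hFQ : F ⊆ K ∧ (F.card : ℝ) * (ν * m / 8)
        ≤ ((F.biUnion (fun j => S j ∩ S a)).card : ℝ) := by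
      have := (mem_filter.1 hFmem).2
      simpa [hQ] using this
    obtain ⟨hFK, hFP⟩ := hFQ
    have hWFm : ((F.biUnion (fun j => S j ∩ S a)).card : ℝ) ≤ m := by
      have hss : F.biUnion (fun j => S j ∩ S a) ⊆ S a :=
        biUnion_subset.2 fun j _ => inter_subset_right
      rw [hmdef]
      exact_mod_cast card_le_card hss
    have hFcard : (F.card : ℝ) ≤ 8 / ν := by
      rw [le_div_iff₀ hν0, ← mul_le_mul_iff_left₀ hm0]
      have h2 : (F.card : ℝ) * ν * m = 8 * ((F.card : ℝ) * (ν * m / 8)) := by ring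
      linarith
    -- maximality consequence: each k ∈ K \ F is half-covered
    have hcov2 : ∀ k ∈ K, k ∉ F →
        ν * m / 8 ≤ ((S k ∩ S a ∩ F.biUnion (fun j => S j ∩ S a)).card : ℝ) := by
      intro k hkK hkF
      by_contra hlt
      push_neg at hlt
      have hkKa : ν / 4 * m ≤ ((S k ∩ S a).card : ℝ) := by
        rw [hK] at hkK
        exact (mem_filter.1 hkK).2.2
      have hunion : ((insert k F).biUnion (fun j => S j ∩ S a))
          = (S k ∩ S a) ∪ F.biUnion (fun j => S j ∩ S a) := biUnion_insert
      have hcard : (((S k ∩ S a) ∪ F.biUnion (fun j => S j ∩ S a)).card : ℝ)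
          = ((S k ∩ S a).card : ℝ) + ((F.biUnion (fun j => S j ∩ S a)).card : ℝ)
            - ((S k ∩ S a ∩ F.biUnion (fun j => S j ∩ S a)).card : ℝ) := by
        have h := Finset.card_union_add_card_inter (S k ∩ S a)
          (F.biUnion (fun j => S j ∩ S a))
        have h' : (((S k ∩ S a) ∪ F.biUnion (fun j => S j ∩ S a)).card : ℝ)
            + ((S k ∩ S a ∩ F.biUnion (fun j => S j ∩ S a)).card : ℝ)
            = ((S k ∩ S a).card : ℝ) + ((F.biUnion (fun j => S j ∩ S a)).card : ℝ) := by
          exact_mod_cast h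
        linarith
      have hQ' : (insert k F) ∈ univ.filter Q := by
        rw [mem_filter]
        refine ⟨mem_univ _, insert_subset hkK hFK, ?_⟩
        rw [Finset.card_insert_of_notMem hkF, hunion, hcard]
        push_cast
        have hr : ν / 4 * m = 2 * (ν * m / 8) := by ring
        linarith
      have hle : (((insert k F).biUnion (fun j => S j ∩ S a)).card : ℕ)
          ≤ ((F.biUnion (fun j => S j ∩ S a)).card : ℕ) := hFmax _ hQ'
      have hle' : (((insert k F).biUnion (fun j => S j ∩ S a)).card : ℝ)
          ≤ ((F.biUnion (fun j => S j ∩ S a)).card : ℝ) := by exact_mod_cast hle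
      rw [hunion, hcard] at hle'
      have hr : ν / 4 * m = 2 * (ν * m / 8) := by ring
      have hr2 : (0:ℝ) < ν * m / 8 := by positivity
      linarith
    refine ⟨F, ?_, hFcard, ?_⟩
    · intro j hj
      have := hFK hj
      rw [hK] at this
      exact (mem_filter.1 this).2.1
    · intro k hkH hka hkF
      have hkK : k ∈ K := by
        rw [hK, mem_filter]
        exact ⟨mem_univ _, hkH, hka⟩
      have h1 := hcov2 k hkK hkF
      have hFne : F.Nonempty := by
        rcases F.eq_empty_or_nonempty with h | h
        · exfalso
          rw [h] at h1
          simp at h1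
          have : (0:ℝ) < ν * m / 8 := by positivity
          linarith
        · exact h
      have hFpos : (0 : ℝ) < (F.card : ℝ) := by
        exact_mod_cast Finset.card_pos.2 hFne
      have h2 : ((S k ∩ S a ∩ F.biUnion (fun j => S j ∩ S a)).card : ℝ)
          ≤ ∑ j ∈ F, ((S k ∩ S a ∩ (S j ∩ S a)).card : ℝ) := by
        have heq : S k ∩ S a ∩ F.biUnion (fun j => S j ∩ S a)
            = F.biUnion (fun j => S k ∩ S a ∩ (S j ∩ S a)) := by
          ext x; simp [mem_biUnion]; tauto
        rw [heq]
        exact_mod_cast Finset.card_biUnion_le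
      by_contra hcon
      push_neg at hcon
      have h3 : ∀ j ∈ F, ((S k ∩ S a ∩ (S j ∩ S a)).card : ℝ) < ν ^ 3 * n / 4 ^ 3 := by
        intro j hj
        have heq : S k ∩ S a ∩ (S j ∩ S a) = S a ∩ S j ∩ S k := by
          ext x; simp; tauto
        rw [heq]
        exact hcon j hj
      have h4 : ∑ j ∈ F, ((S k ∩ S a ∩ (S j ∩ S a)).card : ℝ)
          < ∑ _j ∈ F, ν ^ 3 * n / 4 ^ 3 :=
        Finset.sum_lt_sum_of_nonempty hFne h3
      rw [Finset.sum_const, nsmul_eq_mul] at h4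
      -- ν m/8 ≤ Σ < |F| ν³n/64 ≤ (8/ν) ν³n/64 = ν²n/8 ≤ νm/8 : contradiction
      have h5 : (F.card : ℝ) * (ν ^ 3 * n / 4 ^ 3) ≤ (8 / ν) * (ν ^ 3 * n / 4 ^ 3) := by
        apply mul_le_mul_of_nonneg_right hFcard
        positivity
      have h6 : (8 / ν) * (ν ^ 3 * n / 4 ^ 3) = ν ^ 2 * n / 8 := by
        field_simp
        ring
      have h7 : ν * (ν * (n:ℝ)) ≤ ν * m := mul_le_mul_of_nonneg_left hm hν0.le
      have h8 : ν * (ν * (n:ℝ)) = ν ^ 2 * n := by ring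
      linarith
  choose HH hHH1 hHH2 hHH3 using hC
  refine ⟨H, HH, hHcard, hcover, fun i _ => hHH2 i, ?_, ?_⟩
  · rw [Finset.disjoint_left]
    intro j hjH hjB
    obtain ⟨a, _, hja⟩ := mem_biUnion.1 hjB
    exact hHH1 a j hja hjH
  · intro k hk
    rw [mem_union] at hk
    push_neg at hk
    obtain ⟨hkH, hkB⟩ := hk
    obtain ⟨a, haH, hka⟩ := hB k hkH
    have hkF : k ∉ HH a := fun h => hkB (mem_biUnion.2 ⟨a, haH, h⟩)
    obtain ⟨j, hj, hcard⟩ := hHH3 a k hkH hka hkF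
    exact ⟨a, haH, j, hj, hcard⟩
end
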